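/- arXiv:1912.02784 — 7 statements merged into one kernel-verified Lean document; each statement's English description precedes it below -/
import Mathlib

section
/- Let (Ω, ℱ, ℙ) be a probability space and let X₁, X₂, … be an exchangeable sequence of Bernoulli random variables (each Xₙ takes values in {0,1}). Then there exists a unique Borel probability measure μ on the interval [0,1] such that for every k ∈ ℕ and every e₁, …, e_k ∈ {0,1}, writing α = e₁ + ⋯ + e_k, one has ℙ(X₁ = e₁, …, X_k = e_k) = ∫_{[0,1]} p^α (1 − p)^{k−α} dμ(p). -/
open MeasureTheory Filter Topology
open scoped NNReal ENNReal
set_option linter.unusedSectionVars false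
set_option linter.unusedVariables false
set_option maxHeartbeats 1000000

/-- A sequence of random variables is *exchangeable* if, for every `n`, the joint
distribution of `(X₁, …, Xₙ)` is invariant under every permutation of the indices. -/
def Exchangeable {Ω : Type*} [MeasurableSpace Ω] (ℙ : Measure Ω) (X : ℕ → Ω → ℕ) : Prop :=
  ∀ (n : ℕ) (σ : Equiv.Perm (Fin n)),
    Measure.map (fun ω (j : Fin n) => X (σ j) ω) ℙ =
      Measure.map (fun ω (j : Fin n) => X (j : ℕ) ω) ℙ

namespace DFA


lemma exists_perm_mem_iff {n : ℕ} (s t : Finset (Fin n)) (h : s.card = t.card) :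
    ∃ σ : Equiv.Perm (Fin n), ∀ x, σ x ∈ s ↔ x ∈ t := by
  classical
  have hc1 : Fintype.card {x // x ∈ t} = Fintype.card {x // x ∈ s} := by
    simp [Fintype.card_coe, h]
  have hc2 : Fintype.card {x // ¬ x ∈ t} = Fintype.card {x // ¬ x ∈ s} := by
    rw [Fintype.card_subtype_compl, Fintype.card_subtype_compl, hc1]
  refine ⟨Equiv.subtypeCongr (Fintype.equivOfCardEq hc1) (Fintype.equivOfCardEq hc2), ?_⟩
  intro x
  by_cases hx : x ∈ t
  · simp only [Equiv.subtypeCongr, Equiv.trans_apply, Equiv.sumCompl_symm_apply_of_pos hx,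
      Equiv.sumCongr_apply, Sum.map_inl, Equiv.sumCompl_apply_inl]
    exact ⟨fun _ => hx, fun _ => (Fintype.equivOfCardEq hc1 ⟨x, hx⟩).2⟩
  · simp only [Equiv.subtypeCongr, Equiv.trans_apply, Equiv.sumCompl_symm_apply_of_neg hx,
      Equiv.sumCongr_apply, Sum.map_inr, Equiv.sumCompl_apply_inr]
    exact ⟨fun hs => absurd hs (Fintype.equivOfCardEq hc2 ⟨x, hx⟩).2, fun ht => absurd ht hx⟩

variable {Ω : Type*} [MeasurableSpace Ω] (ℙ : Measure Ω)
  (X : ℕ → Ω → ℕ)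

lemma meas_A {n : ℕ} (P : Fin n → Prop) (c : Fin n → ℕ) :
    MeasurableSet {x : Fin n → ℕ | ∀ j, P j → x j = c j} := by
  have : {x : Fin n → ℕ | ∀ j, P j → x j = c j}
      = ⋂ j, {x : Fin n → ℕ | P j → x j = c j} := by ext x; simp [Set.mem_iInter]
  rw [this]
  refine MeasurableSet.iInter fun j => ?_
  by_cases hP : P j
  · have : {x : Fin n → ℕ | P j → x j = c j} = (fun x : Fin n → ℕ => x j) ⁻¹' {c j} := by
      ext x; simp [hP]
    rw [this]; exact measurable_pi_apply j (measurableSet_singleton _)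
  · have : {x : Fin n → ℕ | P j → x j = c j} = Set.univ := by ext x; simp [hP]
    rw [this]; exact MeasurableSet.univ

lemma perm_prob (hmeas : ∀ n, Measurable (X n)) (hexch : Exchangeable ℙ X) {n : ℕ} (σ : Equiv.Perm (Fin n))
    (A : Set (Fin n → ℕ)) (hA : MeasurableSet A) :
    ℙ ((fun ω (j : Fin n) => X (σ j) ω) ⁻¹' A) = ℙ ((fun ω (j : Fin n) => X (j : ℕ) ω) ⁻¹' A) := by
  have h1 : Measurable (fun ω (j : Fin n) => X (σ j) ω) :=
    measurable_pi_lambda _ fun j => hmeas _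
  have h2 : Measurable (fun ω (j : Fin n) => X (j : ℕ) ω) :=
    measurable_pi_lambda _ fun j => hmeas _
  rw [← Measure.map_apply h1 hA, ← Measure.map_apply h2 hA, hexch]

lemma pattern_perm (hmeas : ∀ n, Measurable (X n)) (hexch : Exchangeable ℙ X) {k : ℕ} (σ : Equiv.Perm (Fin k)) (e : Fin k → ℕ) :
    ℙ {ω | ∀ j : Fin k, X (j : ℕ) ω = e (σ j)} = ℙ {ω | ∀ j : Fin k, X (j : ℕ) ω = e j} := by
  have key := perm_prob ℙ X hmeas hexch σ⁻¹ {x : Fin k → ℕ | ∀ j, True → x j = e j}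
    (meas_A _ _)
  have hL : (fun ω (j : Fin k) => X (σ⁻¹ j : Fin k) ω) ⁻¹' {x | ∀ j, True → x j = e j}
      = {ω | ∀ j : Fin k, X (j : ℕ) ω = e (σ j)} := by
    ext ω
    constructor
    · intro h j
      have := h (σ j) trivial
      simpa using this
    · intro h j _
      have := h (σ⁻¹ j)
      simpa using this
  have hR : (fun ω (j : Fin k) => X (j : ℕ) ω) ⁻¹' {x | ∀ j, True → x j = e j}
      = {ω | ∀ j : Fin k, X (j : ℕ) ω = e j} := by
    ext ω; simp [Set.mem_preimage, Set.mem_setOf_eq]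
  rw [hL, hR] at key
  exact key

lemma pattern_sum (hmeas : ∀ n, Measurable (X n)) (hexch : Exchangeable ℙ X) {k : ℕ} (e e' : Fin k → ℕ)
    (he : ∀ j, e j = 0 ∨ e j = 1) (he' : ∀ j, e' j = 0 ∨ e' j = 1)
    (hsum : ∑ j, e j = ∑ j, e' j) :
    ℙ {ω | ∀ j : Fin k, X (j : ℕ) ω = e j} = ℙ {ω | ∀ j : Fin k, X (j : ℕ) ω = e' j} := by
  classical
  set s := Finset.univ.filter (fun j => e j = 1) with hs
  set t := Finset.univ.filter (fun j => e' j = 1) with ht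
  have hcards : ∀ (f : Fin k → ℕ), (∀ j, f j = 0 ∨ f j = 1) →
      ∑ j, f j = (Finset.univ.filter (fun j => f j = 1)).card := by
    intro f hf
    rw [Finset.card_filter]
    refine Finset.sum_congr rfl fun j _ => ?_
    rcases hf j with h | h <;> simp [h]
  have hcard : s.card = t.card := by
    rw [← hcards e he, ← hcards e' he', hsum]
  obtain ⟨σ, hσ⟩ := exists_perm_mem_iff s t hcard
  have hee' : ∀ j, e (σ j) = e' j := by
    intro j
    by_cases hj : j ∈ t
    · have h1 : σ j ∈ s := (hσ j).2 hj
      rw [hs] at h1; rw [ht] at hj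
      simp only [Finset.mem_filter] at h1 hj
      rw [h1.2, hj.2]
    · have h1 : σ j ∉ s := fun h => hj ((hσ j).1 h)
      rw [hs] at h1; rw [ht] at hj
      simp only [Finset.mem_filter, Finset.mem_univ, true_and] at h1 hj
      rcases he (σ j) with h2 | h2
      · rcases he' j with h3 | h3
        · rw [h2, h3]
        · exact absurd h3 hj
      · exact absurd h2 h1
  have := pattern_perm ℙ X hmeas hexch σ e
  rw [← this]
  congr 1
  ext ω
  simp only [Set.mem_setOf_eq]
  exact forall_congr' fun j => by rw [hee' j]

lemma mem_prob (hmeas : ∀ n, Measurable (X n))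
    (hexch : Exchangeable ℙ X)
    (s : Finset ℕ) :
    ℙ {ω | ∀ l ∈ s, X l ω = 1} = ℙ {ω | ∀ l ∈ Finset.range s.card, X l ω = 1} := by
  classical
  set n := s.card + (s.sup id) + 1 with hn
  have hlt : ∀ l ∈ s, l < n := fun l hl =>
    lt_of_le_of_lt (Finset.le_sup (f := id) hl) (by omega)
  have hcardn : s.card ≤ n := by omega
  set s' : Finset (Fin n) := s.attachFin hlt with hs'
  set t' : Finset (Fin n) := (Finset.range s.card).attachFin
    (fun m hm => lt_of_lt_of_le (Finset.mem_range.1 hm) hcardn) with ht'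
  have hcard : t'.card = s'.card := by
    rw [hs', ht', Finset.card_attachFin, Finset.card_attachFin, Finset.card_range]
  obtain ⟨σ₀, hσ₀⟩ := exists_perm_mem_iff t' s' hcard
  set σ := σ₀⁻¹ with hσ
  set A : Set (Fin n → ℕ) := {x | ∀ j, j ∈ t' → x j = 1} with hA
  have hAmeas : MeasurableSet A := meas_A (fun j => j ∈ t') (fun _ => 1)
  have key := perm_prob ℙ X hmeas hexch σ A hAmeas
  have hL : (fun ω (j : Fin n) => X (σ j : Fin n) ω) ⁻¹' A = {ω | ∀ l ∈ s, X l ω = 1} := by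
    ext ω
    simp only [Set.mem_preimage, hA, Set.mem_setOf_eq]
    constructor
    · intro h l hl
      have hmem : (⟨l, hlt l hl⟩ : Fin n) ∈ s' := by
        rw [hs', Finset.mem_attachFin]; exact hl
      have hmem2 : σ₀ ⟨l, hlt l hl⟩ ∈ t' := (hσ₀ _).mpr hmem
      have := h (σ₀ ⟨l, hlt l hl⟩) hmem2
      rw [hσ] at this
      simpa using this
    · intro h j hj
      have hmem : σ j ∈ s' := by
        rw [hσ]
        have : σ₀ (σ₀⁻¹ j) ∈ t' ↔ σ₀⁻¹ j ∈ s' := hσ₀ _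
        simp only [Equiv.Perm.inv_def, Equiv.apply_symm_apply] at this
        exact this.mp hj
      rw [hs', Finset.mem_attachFin] at hmem
      exact h _ hmem
  have hR : (fun ω (j : Fin n) => X (j : ℕ) ω) ⁻¹' A = {ω | ∀ l ∈ Finset.range s.card, X l ω = 1} := by
    ext ω
    simp only [Set.mem_preimage, hA, Set.mem_setOf_eq]
    constructor
    · intro h l hl
      have hl' : l < s.card := Finset.mem_range.1 hl
      have := h ⟨l, lt_of_lt_of_le hl' hcardn⟩ (by rw [ht', Finset.mem_attachFin]; exact hl)
      exact this
    · intro h j hj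
      rw [ht', Finset.mem_attachFin] at hj
      exact h _ hj
  rw [hL, hR] at key
  exact key


section
variable {Ω : Type*} [MeasurableSpace Ω] (ℙ : Measure Ω) [IsProbabilityMeasure ℙ]
  (X : ℕ → Ω → ℕ)

noncomputable def mR (j : ℕ) : ℝ := (ℙ {ω | ∀ l ∈ Finset.range j, X l ω = 1}).toReal

noncomputable def Av (n : ℕ) (ω : Ω) : ℝ := (n : ℝ)⁻¹ * ∑ i : Fin n, (X i ω : ℝ)

variable (hmeas : ∀ n, Measurable (X n)) (hBer : ∀ n ω, X n ω = 0 ∨ X n ω = 1)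

lemma measurable_Xr (hmeas : ∀ n, Measurable (X n)) (i : ℕ) :
    Measurable fun ω => (X i ω : ℝ) :=
  measurable_from_top.comp (hmeas i)

lemma Xr_nonneg (i : ℕ) (ω : Ω) : (0 : ℝ) ≤ (X i ω : ℝ) := Nat.cast_nonneg _

lemma Xr_le_one (hBer : ∀ n ω, X n ω = 0 ∨ X n ω = 1) (i : ℕ) (ω : Ω) :
    (X i ω : ℝ) ≤ 1 := by
  rcases hBer i ω with h | h <;> simp [h]

lemma measurable_Av (hmeas : ∀ n, Measurable (X n)) (n : ℕ) : Measurable (Av X n) := by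
  unfold Av
  have h : Measurable fun ω => ∑ i : Fin n, (X (i : ℕ) ω : ℝ) :=
    Finset.measurable_sum _ fun i _ => measurable_Xr X hmeas _
  exact h.const_mul _

lemma Av_nonneg (n : ℕ) (ω : Ω) : 0 ≤ Av X n ω :=
  mul_nonneg (by positivity) (Finset.sum_nonneg fun i _ => Xr_nonneg X i ω)

lemma Av_le_one (hBer : ∀ n ω, X n ω = 0 ∨ X n ω = 1) (n : ℕ) (ω : Ω) : Av X n ω ≤ 1 := by
  rcases Nat.eq_zero_or_pos n with h | h
  · simp [Av, h]
  · have hsum : ∑ i : Fin n, (X i ω : ℝ) ≤ n := by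
      calc ∑ i : Fin n, (X i ω : ℝ) ≤ ∑ _i : Fin n, (1 : ℝ) :=
            Finset.sum_le_sum fun i _ => Xr_le_one X hBer i ω
        _ = n := by simp
    rw [Av, inv_mul_le_iff₀ (by positivity : (0:ℝ) < n)]
    simpa using hsum

lemma integrable_of_bdd {f : Ω → ℝ} (hf : Measurable f) (C : ℝ) (h : ∀ ω, |f ω| ≤ C) :
    Integrable f ℙ :=
  (integrable_const C).mono' hf.aestronglyMeasurable (Filter.Eventually.of_forall h)

lemma measurable_event (hmeas : ∀ n, Measurable (X n)) {j : ℕ} (v : Fin j → ℕ) :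
    MeasurableSet {ω | ∀ t, X (v t) ω = 1} := by
  have : {ω | ∀ t, X (v t) ω = 1} = ⋂ t, (X (v t)) ⁻¹' {1} := by
    ext ω; simp [Set.mem_iInter]
  rw [this]
  exact MeasurableSet.iInter fun t => hmeas (v t) (measurableSet_singleton 1)

lemma integral_prodX (hmeas : ∀ n, Measurable (X n)) (hBer : ∀ n ω, X n ω = 0 ∨ X n ω = 1)
    {j : ℕ} (v : Fin j → ℕ) :
    ∫ ω, ∏ t, (X (v t) ω : ℝ) ∂ℙ = (ℙ {ω | ∀ t, X (v t) ω = 1}).toReal := by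
  have hpt : ∀ ω, ∏ t, (X (v t) ω : ℝ) = Set.indicator {ω | ∀ t, X (v t) ω = 1} 1 ω := by
    intro ω
    by_cases h : ∀ t, X (v t) ω = 1
    · rw [Set.indicator_of_mem (show ω ∈ {ω | ∀ t, X (v t) ω = 1} from h)]
      simp only [Pi.one_apply]
      rw [Finset.prod_eq_one]
      intro t _; rw [h t]; norm_num
    · rw [Set.indicator_of_notMem (show ω ∉ {ω | ∀ t, X (v t) ω = 1} from h)]
      push_neg at h
      obtain ⟨t, ht⟩ := h
      have h0 : X (v t) ω = 0 := (hBer (v t) ω).resolve_right ht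
      exact Finset.prod_eq_zero (Finset.mem_univ t) (by simp [h0])
  calc ∫ ω, ∏ t, (X (v t) ω : ℝ) ∂ℙ
      = ∫ ω, Set.indicator {ω | ∀ t, X (v t) ω = 1} 1 ω ∂ℙ := by
        exact integral_congr_ae (Filter.Eventually.of_forall hpt)
    _ = (ℙ {ω | ∀ t, X (v t) ω = 1}).toReal :=
        integral_indicator_one (measurable_event X hmeas v)

lemma integrable_prodX (hmeas : ∀ n, Measurable (X n)) (hBer : ∀ n ω, X n ω = 0 ∨ X n ω = 1)
    {j : ℕ} (v : Fin j → ℕ) :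
    Integrable (fun ω => ∏ t, (X (v t) ω : ℝ)) ℙ := by
  refine integrable_of_bdd ℙ (Finset.measurable_prod _ fun t _ => measurable_Xr X hmeas (v t)) 1 ?_
  intro ω
  rw [abs_of_nonneg (Finset.prod_nonneg fun t _ => Xr_nonneg X _ ω)]
  exact Finset.prod_le_one (fun t _ => Xr_nonneg X _ ω) (fun t _ => Xr_le_one X hBer _ ω)

-- injective case: expectation of product equals mR j
lemma integral_prodX_inj
    (hmem : ∀ s : Finset ℕ,
      ℙ {ω | ∀ l ∈ s, X l ω = 1} = ℙ {ω | ∀ l ∈ Finset.range s.card, X l ω = 1})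
    (hmeas : ∀ n, Measurable (X n)) (hBer : ∀ n ω, X n ω = 0 ∨ X n ω = 1)
    {j : ℕ} (v : Fin j → ℕ) (hv : Function.Injective v) :
    ∫ ω, ∏ t, (X (v t) ω : ℝ) ∂ℙ = mR ℙ X j := by
  classical
  rw [integral_prodX ℙ X hmeas hBer v]
  have h1 : {ω | ∀ t, X (v t) ω = 1} = {ω | ∀ l ∈ Finset.image v Finset.univ, X l ω = 1} := by
    ext ω
    simp only [Set.mem_setOf_eq, Finset.mem_image]
    constructor
    · rintro h l ⟨t, _, rfl⟩; exact h t
    · intro h t; exact h (v t) ⟨t, Finset.mem_univ t, rfl⟩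
  have hcard : (Finset.image v Finset.univ).card = j := by
    rw [Finset.card_image_of_injective _ hv, Finset.card_univ, Fintype.card_fin]
  rw [mR, h1, hmem (Finset.image v Finset.univ), hcard]
end

section moments
variable {Ω : Type*} [MeasurableSpace Ω] (ℙ : Measure Ω) [IsProbabilityMeasure ℙ]
  (X : ℕ → Ω → ℕ)

lemma sum_pow_expand {n j : ℕ} (a : Fin n → ℝ) :
    (∑ i : Fin n, a i) ^ j = ∑ v : Fin j → Fin n, ∏ t : Fin j, a (v t) := by
  classical
  calc (∑ i : Fin n, a i) ^ j = ∏ _t : Fin j, ∑ i : Fin n, a i := by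
        rw [Finset.prod_const, Finset.card_univ, Fintype.card_fin]
    _ = ∑ v ∈ Fintype.piFinset (fun _ : Fin j => (Finset.univ : Finset (Fin n))),
          ∏ t : Fin j, a (v t) := Finset.prod_univ_sum _ _
    _ = ∑ v : Fin j → Fin n, ∏ t : Fin j, a (v t) := by rw [Fintype.piFinset_univ]

lemma integral_Av_pow (hmeas : ∀ n, Measurable (X n)) (hBer : ∀ n ω, X n ω = 0 ∨ X n ω = 1)
    (n j : ℕ) :
    ∫ ω, (Av X n ω) ^ j ∂ℙ =
      ((n : ℝ)⁻¹) ^ j * ∑ v : Fin j → Fin n,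
        (ℙ {ω | ∀ t : Fin j, X (v t : ℕ) ω = 1}).toReal := by
  have hpt : ∀ ω, (Av X n ω) ^ j
      = ((n : ℝ)⁻¹) ^ j * ∑ v : Fin j → Fin n, ∏ t : Fin j, (X (v t : ℕ) ω : ℝ) := by
    intro ω
    rw [Av, mul_pow, sum_pow_expand]
  rw [integral_congr_ae (Filter.Eventually.of_forall hpt)]
  rw [integral_const_mul, integral_finset_sum]
  · congr 1
    refine Finset.sum_congr rfl fun v _ => ?_
    exact integral_prodX ℙ X hmeas hBer (fun t => (v t : ℕ))
  · exact fun v _ => integrable_prodX ℙ X hmeas hBer (fun t => (v t : ℕ))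

lemma descFactorial_ratio_tendsto (j : ℕ) :
    Tendsto (fun n : ℕ => (n.descFactorial j : ℝ) / (n : ℝ) ^ j) atTop (𝓝 1) := by
  have hg : Tendsto (fun n : ℕ => ∏ i ∈ Finset.range j, (1 - (i : ℝ) / n)) atTop (𝓝 1) := by
    have : Tendsto (fun n : ℕ => ∏ i ∈ Finset.range j, (1 - (i : ℝ) / n)) atTop
        (𝓝 (∏ i ∈ Finset.range j, 1)) := by
      refine tendsto_finset_prod _ fun i _ => ?_
      have h0 : Tendsto (fun n : ℕ => (i : ℝ) / n) atTop (𝓝 0) :=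
        tendsto_const_div_atTop_nhds_zero_nat _
      have := h0.const_sub 1
      simpa using this
    simpa using this
  refine hg.congr' ?_
  filter_upwards [eventually_ge_atTop (j + 1)] with n hn
  have hn0 : (0 : ℝ) < n := by
    have : 0 < n := by omega
    exact_mod_cast this
  have : (n.descFactorial j : ℝ) = ∏ i ∈ Finset.range j, ((n : ℝ) - i) := by
    rw [Nat.descFactorial_eq_prod_range]
    push_cast [Finset.prod_natCast]
    refine Finset.prod_congr rfl fun i hi => ?_
    have : i ≤ n := by
      have := Finset.mem_range.1 hi; omega
    rw [Nat.cast_sub this]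
  rw [this]
  rw [show (n : ℝ) ^ j = ∏ _i ∈ Finset.range j, (n : ℝ) by
    rw [Finset.prod_const, Finset.card_range]]
  rw [← Finset.prod_div_distrib]
  refine Finset.prod_congr rfl fun i _ => ?_
  field_simp

lemma card_injective_filter (j n : ℕ) :
    (Finset.univ.filter (fun v : Fin j → Fin n => Function.Injective v)).card
      = n.descFactorial j := by
  classical
  rw [← Fintype.card_subtype]
  rw [Fintype.card_congr (Equiv.subtypeInjectiveEquivEmbedding (Fin j) (Fin n))]
  rw [Fintype.card_embedding_eq, Fintype.card_fin, Fintype.card_fin]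

lemma tendsto_integral_Av_pow
    (hmem : ∀ s : Finset ℕ,
      ℙ {ω | ∀ l ∈ s, X l ω = 1} = ℙ {ω | ∀ l ∈ Finset.range s.card, X l ω = 1})
    (hmeas : ∀ n, Measurable (X n)) (hBer : ∀ n ω, X n ω = 0 ∨ X n ω = 1) (j : ℕ) :
    Tendsto (fun n => ∫ ω, (Av X n ω) ^ j ∂ℙ) atTop (𝓝 (mR ℙ X j)) := by
  classical
  have hm01 : 0 ≤ mR ℙ X j ∧ mR ℙ X j ≤ 1 := by
    constructor
    · exact ENNReal.toReal_nonneg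
    · rw [mR]
      exact ENNReal.toReal_le_of_le_ofReal one_pos.le (by simpa using prob_le_one)
  have hP01 : ∀ (n : ℕ) (v : Fin j → Fin n),
      0 ≤ (ℙ {ω | ∀ t : Fin j, X (v t : ℕ) ω = 1}).toReal ∧
      (ℙ {ω | ∀ t : Fin j, X (v t : ℕ) ω = 1}).toReal ≤ 1 := by
    intro n v
    constructor
    · exact ENNReal.toReal_nonneg
    · exact ENNReal.toReal_le_of_le_ofReal one_pos.le (by simpa using prob_le_one)
  have hPinj : ∀ (n : ℕ) (v : Fin j → Fin n), Function.Injective v →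
      (ℙ {ω | ∀ t : Fin j, X (v t : ℕ) ω = 1}).toReal = mR ℙ X j := by
    intro n v hv
    have hvinj : Function.Injective (fun t => (v t : ℕ)) :=
      fun a b hab => hv (Fin.val_injective hab)
    rw [← integral_prodX ℙ X hmeas hBer (fun t => (v t : ℕ)),
      integral_prodX_inj ℙ X hmem hmeas hBer _ hvinj]
  -- bound: for n ≥ 1, |∫ Av^j - mR j| ≤ 2 * (1 - r n)
  have hbound : ∀ n : ℕ, 1 ≤ n →
      |∫ ω, (Av X n ω) ^ j ∂ℙ - mR ℙ X j|
        ≤ 2 * (1 - (n.descFactorial j : ℝ) / (n : ℝ) ^ j) := by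
    intro n hn
    have hn0 : (0 : ℝ) < n := by exact_mod_cast hn
    have hnj : (0 : ℝ) < (n : ℝ) ^ j := by positivity
    have hr1 : (n.descFactorial j : ℝ) / (n : ℝ) ^ j ≤ 1 := by
      rw [div_le_one hnj]
      exact_mod_cast Nat.descFactorial_le_pow n j
    rw [integral_Av_pow ℙ X hmeas hBer n j]
    set P := fun v : Fin j → Fin n => (ℙ {ω | ∀ t : Fin j, X (v t : ℕ) ω = 1}).toReal with hP
    have hsplit : ∑ v : Fin j → Fin n, P v
        = (n.descFactorial j : ℝ) * mR ℙ X j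
          + ∑ v ∈ Finset.univ.filter (fun v : Fin j → Fin n => ¬ Function.Injective v), P v := by
      rw [← Finset.sum_filter_add_sum_filter_not Finset.univ
        (fun v : Fin j → Fin n => Function.Injective v) P]
      congr 1
      rw [Finset.sum_congr rfl (fun v hv => hPinj n v (Finset.mem_filter.1 hv).2),
        Finset.sum_const, card_injective_filter, nsmul_eq_mul]
    have hT0 : 0 ≤ ∑ v ∈ Finset.univ.filter
        (fun v : Fin j → Fin n => ¬ Function.Injective v), P v :=
      Finset.sum_nonneg fun v _ => (hP01 n v).1
    have hTle : ∑ v ∈ Finset.univ.filter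
        (fun v : Fin j → Fin n => ¬ Function.Injective v), P v
        ≤ (n : ℝ) ^ j - n.descFactorial j := by
      calc ∑ v ∈ Finset.univ.filter (fun v : Fin j → Fin n => ¬ Function.Injective v), P v
          ≤ ∑ v ∈ Finset.univ.filter (fun v : Fin j → Fin n => ¬ Function.Injective v), 1 :=
            Finset.sum_le_sum fun v _ => (hP01 n v).2
        _ = ((Finset.univ.filter (fun v : Fin j → Fin n => ¬ Function.Injective v)).card : ℝ) := by
            simp
        _ = (n : ℝ) ^ j - n.descFactorial j := by
            rw [Finset.filter_not, Finset.card_sdiff_of_subset (Finset.filter_subset _ _)]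
            rw [card_injective_filter]
            have hcard : (Finset.univ : Finset (Fin j → Fin n)).card = n ^ j := by
              rw [Finset.card_univ, Fintype.card_fun, Fintype.card_fin, Fintype.card_fin]
            rw [hcard, Nat.cast_sub (Nat.descFactorial_le_pow n j)]
            push_cast
            ring
    have hdesc_le : (n.descFactorial j : ℝ) ≤ (n : ℝ) ^ j := by
      have := Nat.descFactorial_le_pow n j
      exact_mod_cast this
    set T := ∑ v ∈ Finset.univ.filter
        (fun v : Fin j → Fin n => ¬ Function.Injective v), P v with hT
    rw [hsplit]
    have heq : ((n : ℝ)⁻¹) ^ j * ((n.descFactorial j : ℝ) * mR ℙ X j + T) - mR ℙ X j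
        = ((n.descFactorial j : ℝ) / (n : ℝ) ^ j - 1) * mR ℙ X j + T / (n : ℝ) ^ j := by
      rw [inv_pow]
      field_simp
      ring
    rw [heq]
    have h1 : |((n.descFactorial j : ℝ) / (n : ℝ) ^ j - 1) * mR ℙ X j|
        ≤ 1 - (n.descFactorial j : ℝ) / (n : ℝ) ^ j := by
      rw [abs_mul]
      have : |(n.descFactorial j : ℝ) / (n : ℝ) ^ j - 1|
          = 1 - (n.descFactorial j : ℝ) / (n : ℝ) ^ j := by
        rw [abs_of_nonpos (by linarith)]
        ring
      rw [this]
      calc (1 - (n.descFactorial j : ℝ) / (n : ℝ) ^ j) * |mR ℙ X j|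
          ≤ (1 - (n.descFactorial j : ℝ) / (n : ℝ) ^ j) * 1 := by
            refine mul_le_mul_of_nonneg_left ?_ ?_
            · rw [abs_of_nonneg hm01.1]; exact hm01.2
            · have : (n.descFactorial j : ℝ) / (n : ℝ) ^ j ≤ 1 := by
                rw [div_le_one hnj]; exact hdesc_le
              linarith
        _ = 1 - (n.descFactorial j : ℝ) / (n : ℝ) ^ j := mul_one _
    have h2 : |T / (n : ℝ) ^ j| ≤ 1 - (n.descFactorial j : ℝ) / (n : ℝ) ^ j := by
      rw [abs_of_nonneg (div_nonneg hT0 hnj.le)]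
      rw [div_le_iff₀ hnj]
      calc T ≤ (n : ℝ) ^ j - n.descFactorial j := hTle
        _ = (1 - (n.descFactorial j : ℝ) / (n : ℝ) ^ j) * (n : ℝ) ^ j := by
            field_simp
    calc |((n.descFactorial j : ℝ) / (n : ℝ) ^ j - 1) * mR ℙ X j + T / (n : ℝ) ^ j|
        ≤ |((n.descFactorial j : ℝ) / (n : ℝ) ^ j - 1) * mR ℙ X j| + |T / (n : ℝ) ^ j| :=
          abs_add_le _ _
      _ ≤ 2 * (1 - (n.descFactorial j : ℝ) / (n : ℝ) ^ j) := by linarith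
  -- squeeze
  have hb : Tendsto (fun n : ℕ => 2 * (1 - (n.descFactorial j : ℝ) / (n : ℝ) ^ j)) atTop
      (𝓝 0) := by
    have := (descFactorial_ratio_tendsto j).const_sub 1
    have h2 := this.const_mul 2
    simpa using h2
  rw [tendsto_iff_dist_tendsto_zero]
  refine squeeze_zero' (Filter.Eventually.of_forall fun n => dist_nonneg) ?_ hb
  filter_upwards [eventually_ge_atTop 1] with n hn
  rw [Real.dist_eq]
  exact hbound n hn

end moments

section cross
variable {Ω : Type*} [MeasurableSpace Ω] (ℙ : Measure Ω) [IsProbabilityMeasure ℙ]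
  (X : ℕ → Ω → ℕ)

lemma integral_XX_ne
    (hmem : ∀ s : Finset ℕ,
      ℙ {ω | ∀ l ∈ s, X l ω = 1} = ℙ {ω | ∀ l ∈ Finset.range s.card, X l ω = 1})
    (hmeas : ∀ n, Measurable (X n)) (hBer : ∀ n ω, X n ω = 0 ∨ X n ω = 1)
    {i j : ℕ} (hij : i ≠ j) :
    ∫ ω, (X i ω : ℝ) * (X j ω : ℝ) ∂ℙ = mR ℙ X 2 := by
  have hv : Function.Injective (![i, j] : Fin 2 → ℕ) := by
    intro a b hab
    fin_cases a <;> fin_cases b <;> simp_all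
  have := integral_prodX_inj ℙ X hmem hmeas hBer (![i, j] : Fin 2 → ℕ) hv
  rw [← this]
  refine integral_congr_ae (Filter.Eventually.of_forall fun ω => ?_)
  simp [Fin.prod_univ_succ]

lemma integral_X (hmem : ∀ s : Finset ℕ,
      ℙ {ω | ∀ l ∈ s, X l ω = 1} = ℙ {ω | ∀ l ∈ Finset.range s.card, X l ω = 1})
    (hmeas : ∀ n, Measurable (X n)) (hBer : ∀ n ω, X n ω = 0 ∨ X n ω = 1) (i : ℕ) :
    ∫ ω, (X i ω : ℝ) ∂ℙ = mR ℙ X 1 := by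
  have hv : Function.Injective (![i] : Fin 1 → ℕ) := by
    intro a b _; omega
  have := integral_prodX_inj ℙ X hmem hmeas hBer (![i] : Fin 1 → ℕ) hv
  rw [← this]
  refine integral_congr_ae (Filter.Eventually.of_forall fun ω => ?_)
  simp [Fin.prod_univ_succ]

lemma integral_XX_eq (hmem : ∀ s : Finset ℕ,
      ℙ {ω | ∀ l ∈ s, X l ω = 1} = ℙ {ω | ∀ l ∈ Finset.range s.card, X l ω = 1})
    (hmeas : ∀ n, Measurable (X n)) (hBer : ∀ n ω, X n ω = 0 ∨ X n ω = 1) (i : ℕ) :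
    ∫ ω, (X i ω : ℝ) * (X i ω : ℝ) ∂ℙ = mR ℙ X 1 := by
  rw [← integral_X ℙ X hmem hmeas hBer i]
  refine integral_congr_ae (Filter.Eventually.of_forall fun ω => ?_)
  rcases hBer i ω with h | h <;> simp [h]

lemma integral_Av_mul (hmem : ∀ s : Finset ℕ,
      ℙ {ω | ∀ l ∈ s, X l ω = 1} = ℙ {ω | ∀ l ∈ Finset.range s.card, X l ω = 1})
    (hmeas : ∀ n, Measurable (X n)) (hBer : ∀ n ω, X n ω = 0 ∨ X n ω = 1)
    {n m : ℕ} (hn : 1 ≤ n) (hnm : n ≤ m) :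
    ∫ ω, Av X n ω * Av X m ω ∂ℙ
      = mR ℙ X 2 + (mR ℙ X 1 - mR ℙ X 2) / m := by
  classical
  have hm : 1 ≤ m := le_trans hn hnm
  have hn0 : (n : ℝ) ≠ 0 := by positivity
  have hm0 : (m : ℝ) ≠ 0 := by positivity
  have hpt : ∀ ω, Av X n ω * Av X m ω
      = (n : ℝ)⁻¹ * (m : ℝ)⁻¹ *
        ∑ i : Fin n, ∑ j : Fin m, (X (i : ℕ) ω : ℝ) * (X (j : ℕ) ω : ℝ) := by
    intro ω
    have hs := Finset.sum_mul_sum (Finset.univ : Finset (Fin n)) (Finset.univ : Finset (Fin m))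
      (fun i => (X (i : ℕ) ω : ℝ)) (fun j => (X (j : ℕ) ω : ℝ))
    rw [Av, Av]
    calc (n : ℝ)⁻¹ * (∑ i : Fin n, (X (i : ℕ) ω : ℝ)) * ((m : ℝ)⁻¹ * ∑ j : Fin m, (X (j : ℕ) ω : ℝ))
        = (n : ℝ)⁻¹ * (m : ℝ)⁻¹ *
          ((∑ i : Fin n, (X (i : ℕ) ω : ℝ)) * ∑ j : Fin m, (X (j : ℕ) ω : ℝ)) := by ring
      _ = (n : ℝ)⁻¹ * (m : ℝ)⁻¹ *
          ∑ i : Fin n, ∑ j : Fin m, (X (i : ℕ) ω : ℝ) * (X (j : ℕ) ω : ℝ) := by rw [hs]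
  rw [integral_congr_ae (Filter.Eventually.of_forall hpt), integral_const_mul,
    integral_finset_sum]
  swap
  · intro i _
    refine integrable_finset_sum _ fun j _ => ?_
    refine integrable_of_bdd ℙ ((measurable_Xr X hmeas _).mul (measurable_Xr X hmeas _)) 1 ?_
    intro ω
    rw [abs_of_nonneg (mul_nonneg (Xr_nonneg X _ ω) (Xr_nonneg X _ ω))]
    exact mul_le_one₀ (Xr_le_one X hBer _ ω) (Xr_nonneg X _ ω) (Xr_le_one X hBer _ ω)
  have hinner : ∀ i : Fin n, ∫ ω, ∑ j : Fin m, (X (i : ℕ) ω : ℝ) * (X (j : ℕ) ω : ℝ) ∂ℙ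
      = (m : ℝ) * mR ℙ X 2 + (mR ℙ X 1 - mR ℙ X 2) := by
    intro i
    rw [integral_finset_sum]
    swap
    · intro j _
      refine integrable_of_bdd ℙ ((measurable_Xr X hmeas _).mul (measurable_Xr X hmeas _)) 1 ?_
      intro ω
      rw [abs_of_nonneg (mul_nonneg (Xr_nonneg X _ ω) (Xr_nonneg X _ ω))]
      exact mul_le_one₀ (Xr_le_one X hBer _ ω) (Xr_nonneg X _ ω) (Xr_le_one X hBer _ ω)
    set i' : Fin m := ⟨(i : ℕ), lt_of_lt_of_le i.2 hnm⟩ with hi'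
    have hterm : ∀ j : Fin m, ∫ ω, (X (i : ℕ) ω : ℝ) * (X (j : ℕ) ω : ℝ) ∂ℙ
        = mR ℙ X 2 + (if j = i' then mR ℙ X 1 - mR ℙ X 2 else 0) := by
      intro j
      by_cases hj : j = i'
      · subst hj
        have : (i' : ℕ) = (i : ℕ) := rfl
        rw [this, integral_XX_eq ℙ X hmem hmeas hBer]
        simp
      · have hne : (i : ℕ) ≠ (j : ℕ) := by
          intro h
          apply hj
          apply Fin.ext
          rw [← h]
        rw [integral_XX_ne ℙ X hmem hmeas hBer hne]
        simp [hj]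
    rw [Finset.sum_congr rfl fun j _ => hterm j, Finset.sum_add_distrib,
      Finset.sum_const, Finset.sum_ite_eq' Finset.univ i' (fun _ => mR ℙ X 1 - mR ℙ X 2)]
    simp [Finset.card_univ, mul_comm]
  rw [Finset.sum_congr rfl fun i _ => hinner i, Finset.sum_const, Finset.card_univ,
    Fintype.card_fin, nsmul_eq_mul]
  field_simp

lemma mR_le (j : ℕ) : mR ℙ X (j + 1) ≤ mR ℙ X j := by
  refine ENNReal.toReal_mono (measure_ne_top _ _) (measure_mono fun ω h => ?_)
  intro l hl
  exact h l (Finset.mem_range.2 (lt_of_lt_of_le (Finset.mem_range.1 hl) (Nat.le_succ j)))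

lemma mR_nonneg (j : ℕ) : 0 ≤ mR ℙ X j := ENNReal.toReal_nonneg

lemma mR_le_one (j : ℕ) : mR ℙ X j ≤ 1 :=
  ENNReal.toReal_le_of_le_ofReal one_pos.le (by simpa using prob_le_one)

lemma integral_sq_diff (hmem : ∀ s : Finset ℕ,
      ℙ {ω | ∀ l ∈ s, X l ω = 1} = ℙ {ω | ∀ l ∈ Finset.range s.card, X l ω = 1})
    (hmeas : ∀ n, Measurable (X n)) (hBer : ∀ n ω, X n ω = 0 ∨ X n ω = 1)
    {n m : ℕ} (hn : 1 ≤ n) (hnm : n ≤ m) :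
    ∫ ω, (Av X n ω - Av X m ω) ^ 2 ∂ℙ ≤ 1 / n := by
  have hm : 1 ≤ m := le_trans hn hnm
  have hint : ∀ a b : ℕ, Integrable (fun ω => Av X a ω * Av X b ω) ℙ := by
    intro a b
    refine integrable_of_bdd ℙ ((measurable_Av X hmeas a).mul (measurable_Av X hmeas b)) 1 ?_
    intro ω
    rw [abs_of_nonneg (mul_nonneg (Av_nonneg X a ω) (Av_nonneg X b ω))]
    exact mul_le_one₀ (Av_le_one X hBer a ω) (Av_nonneg X b ω) (Av_le_one X hBer b ω)
  have hpt : ∀ ω, (Av X n ω - Av X m ω) ^ 2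
      = Av X n ω * Av X n ω - 2 * (Av X n ω * Av X m ω) + Av X m ω * Av X m ω := by
    intro ω; ring
  rw [integral_congr_ae (Filter.Eventually.of_forall hpt)]
  have hf1 : Integrable (fun ω => Av X n ω * Av X n ω - 2 * (Av X n ω * Av X m ω)) ℙ :=
    (hint n n).sub ((hint n m).const_mul 2)
  have hf2 : Integrable (fun ω => 2 * (Av X n ω * Av X m ω)) ℙ := (hint n m).const_mul 2
  rw [integral_add hf1 (hint m m), integral_sub (hint n n) hf2, integral_const_mul]
  rw [integral_Av_mul ℙ X hmem hmeas hBer hn le_rfl,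
    integral_Av_mul ℙ X hmem hmeas hBer hn hnm,
    integral_Av_mul ℙ X hmem hmeas hBer hm le_rfl]
  have hd0 : 0 ≤ mR ℙ X 1 - mR ℙ X 2 := by linarith [mR_le ℙ X 1]
  have hd1 : mR ℙ X 1 - mR ℙ X 2 ≤ 1 := by
    linarith [mR_le_one ℙ X 1, mR_nonneg ℙ X 2]
  have hn0 : (0 : ℝ) < n := by exact_mod_cast hn
  have hm0 : (0 : ℝ) < m := by exact_mod_cast hm
  have hmn : (1 : ℝ) / m ≤ 1 / n := by
    apply one_div_le_one_div_of_le hn0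
    exact_mod_cast hnm
  have heq : mR ℙ X 2 + (mR ℙ X 1 - mR ℙ X 2) / n
      - 2 * (mR ℙ X 2 + (mR ℙ X 1 - mR ℙ X 2) / m)
      + (mR ℙ X 2 + (mR ℙ X 1 - mR ℙ X 2) / m)
      = (mR ℙ X 1 - mR ℙ X 2) * (1 / n - 1 / m) := by ring
  rw [heq]
  calc (mR ℙ X 1 - mR ℙ X 2) * (1 / n - 1 / m) ≤ 1 * (1 / n - 1 / m) := by
        refine mul_le_mul_of_nonneg_right hd1 ?_
        linarith
    _ ≤ 1 / n := by
        rw [one_mul]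
        have : (0 : ℝ) < 1 / m := by positivity
        linarith

end cross

section limitvar
variable {Ω : Type*} [MeasurableSpace Ω] (ℙ : Measure Ω) [IsProbabilityMeasure ℙ]
  (X : ℕ → Ω → ℕ)

lemma abs_le_sq_mul_add (a ε : ℝ) (hε : 0 < ε) : |a| ≤ a ^ 2 / ε + ε := by
  rcases le_or_gt (|a|) ε with h | h
  · have h2 : 0 ≤ a ^ 2 / ε := by positivity
    linarith
  · have h2 : |a| ≤ a ^ 2 / ε := by
      rw [le_div_iff₀ hε]
      nlinarith [sq_abs a, mul_le_mul_of_nonneg_left h.le (abs_nonneg a)]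
    linarith

lemma integral_abs_diff_le (hmem : ∀ s : Finset ℕ,
      ℙ {ω | ∀ l ∈ s, X l ω = 1} = ℙ {ω | ∀ l ∈ Finset.range s.card, X l ω = 1})
    (hmeas : ∀ n, Measurable (X n)) (hBer : ∀ n ω, X n ω = 0 ∨ X n ω = 1) (k : ℕ) :
    ∫ ω, |Av X (16 ^ k) ω - Av X (16 ^ (k + 1)) ω| ∂ℙ ≤ 2 * (1 / 4 : ℝ) ^ k := by
  have h16 : (1 : ℕ) ≤ 16 ^ k := Nat.one_le_pow _ _ (by norm_num)
  have h16' : (16 : ℕ) ^ k ≤ 16 ^ (k + 1) := Nat.pow_le_pow_right (by norm_num) (Nat.le_succ k)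
  have hd_meas : Measurable fun ω => Av X (16 ^ k) ω - Av X (16 ^ (k + 1)) ω :=
    (measurable_Av X hmeas _).sub (measurable_Av X hmeas _)
  have hd_bdd : ∀ ω, |Av X (16 ^ k) ω - Av X (16 ^ (k + 1)) ω| ≤ 2 := by
    intro ω
    rw [abs_sub_le_iff]
    constructor <;>
      [skip; skip] <;>
      · have h1 := Av_le_one X hBer (16 ^ k) ω
        have h2 := Av_nonneg X (16 ^ k) ω
        have h3 := Av_le_one X hBer (16 ^ (k + 1)) ω
        have h4 := Av_nonneg X (16 ^ (k + 1)) ω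
        linarith
  have hε : (0 : ℝ) < (1 / 4 : ℝ) ^ k := by positivity
  have hpt : ∀ ω, |Av X (16 ^ k) ω - Av X (16 ^ (k + 1)) ω|
      ≤ (Av X (16 ^ k) ω - Av X (16 ^ (k + 1)) ω) ^ 2 / (1 / 4 : ℝ) ^ k + (1 / 4 : ℝ) ^ k :=
    fun ω => abs_le_sq_mul_add _ _ hε
  have hint_sq : Integrable (fun ω => (Av X (16 ^ k) ω - Av X (16 ^ (k + 1)) ω) ^ 2) ℙ := by
    refine integrable_of_bdd ℙ (hd_meas.pow_const 2) 4 ?_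
    intro ω
    rw [abs_of_nonneg (sq_nonneg _)]
    calc (Av X (16 ^ k) ω - Av X (16 ^ (k + 1)) ω) ^ 2
        = |Av X (16 ^ k) ω - Av X (16 ^ (k + 1)) ω| ^ 2 := (sq_abs _).symm
      _ ≤ 2 ^ 2 := by
          refine pow_le_pow_left₀ (abs_nonneg _) (hd_bdd ω) 2
      _ = 4 := by norm_num
  have hint_abs : Integrable (fun ω => |Av X (16 ^ k) ω - Av X (16 ^ (k + 1)) ω|) ℙ :=
    integrable_of_bdd ℙ hd_meas.abs 2 (fun ω => by rw [abs_abs]; exact hd_bdd ω)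
  calc ∫ ω, |Av X (16 ^ k) ω - Av X (16 ^ (k + 1)) ω| ∂ℙ
      ≤ ∫ ω, ((Av X (16 ^ k) ω - Av X (16 ^ (k + 1)) ω) ^ 2 / (1 / 4 : ℝ) ^ k
          + (1 / 4 : ℝ) ^ k) ∂ℙ := by
        refine integral_mono hint_abs ?_ hpt
        exact ((hint_sq.div_const _).add (integrable_const _))
    _ = (∫ ω, (Av X (16 ^ k) ω - Av X (16 ^ (k + 1)) ω) ^ 2 ∂ℙ) / (1 / 4 : ℝ) ^ k
          + (1 / 4 : ℝ) ^ k := by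
        rw [integral_add (hint_sq.div_const _) (integrable_const _), integral_div,
          integral_const]
        simp
    _ ≤ (1 / (16 ^ k : ℕ) : ℝ) / (1 / 4 : ℝ) ^ k + (1 / 4 : ℝ) ^ k := by
        have := integral_sq_diff ℙ X hmem hmeas hBer h16 h16'
        have h2 : (0:ℝ) < (1/4:ℝ)^k := hε
        gcongr
    _ = 2 * (1 / 4 : ℝ) ^ k := by
        have : ((16 ^ k : ℕ) : ℝ) = 16 ^ k := by push_cast; ring
        rw [this]
        have h4 : (16 : ℝ) ^ k = 4 ^ k * 4 ^ k := by
          rw [← mul_pow]; norm_num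
        rw [h4]
        have h4k : (4 : ℝ) ^ k ≠ 0 := by positivity
        field_simp
        have h14 : (4 : ℝ) ^ k * (1 / 4) ^ k = 1 := by rw [← mul_pow]; norm_num
        linear_combination (-(1 + (4 : ℝ) ^ k * (1 / 4) ^ k)) * h14

lemma exists_limit_var (hmem : ∀ s : Finset ℕ,
      ℙ {ω | ∀ l ∈ s, X l ω = 1} = ℙ {ω | ∀ l ∈ Finset.range s.card, X l ω = 1})
    (hmeas : ∀ n, Measurable (X n)) (hBer : ∀ n ω, X n ω = 0 ∨ X n ω = 1) :
    ∃ Y : Ω → ℝ, Measurable Y ∧ (∀ ω, 0 ≤ Y ω ∧ Y ω ≤ 1) ∧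
      ∀ᵐ ω ∂ℙ, Tendsto (fun k => Av X (16 ^ k) ω) atTop (𝓝 (Y ω)) := by
  classical
  set B : ℕ → Ω → ℝ := fun k ω => Av X (16 ^ k) ω with hB
  set d : ℕ → Ω → ℝ := fun k ω => |B k ω - B (k + 1) ω| with hd
  have hd_meas : ∀ k, Measurable (d k) :=
    fun k => ((measurable_Av X hmeas _).sub (measurable_Av X hmeas _)).abs
  have hd_int : ∀ k, Integrable (d k) ℙ := by
    intro k
    refine integrable_of_bdd ℙ (hd_meas k) 2 ?_
    intro ω
    rw [abs_abs, abs_sub_le_iff]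
    have h1 := Av_le_one X hBer (16 ^ k) ω
    have h2 := Av_nonneg X (16 ^ k) ω
    have h3 := Av_le_one X hBer (16 ^ (k + 1)) ω
    have h4 := Av_nonneg X (16 ^ (k + 1)) ω
    constructor <;> simp only [hB] <;> linarith
  have hG : ∫⁻ ω, ∑' k, ENNReal.ofReal (d k ω) ∂ℙ ≠ ⊤ := by
    rw [lintegral_tsum (fun k => ((hd_meas k).ennreal_ofReal).aemeasurable)]
    have hle : ∀ k, ∫⁻ ω, ENNReal.ofReal (d k ω) ∂ℙ ≤ ENNReal.ofReal (2 * (1 / 4 : ℝ) ^ k) := by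
      intro k
      rw [← ofReal_integral_eq_lintegral_ofReal (hd_int k)
        (Filter.Eventually.of_forall fun ω => abs_nonneg _)]
      exact ENNReal.ofReal_le_ofReal (integral_abs_diff_le ℙ X hmem hmeas hBer k)
    have hsum : Summable fun k : ℕ => 2 * (1 / 4 : ℝ) ^ k :=
      (summable_geometric_of_lt_one (by norm_num) (by norm_num)).mul_left 2
    have : ∑' k, ENNReal.ofReal (2 * (1 / 4 : ℝ) ^ k)
        = ENNReal.ofReal (∑' k, 2 * (1 / 4 : ℝ) ^ k) :=
      (ENNReal.ofReal_tsum_of_nonneg (fun k => by positivity) hsum).symm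
    refine ne_top_of_le_ne_top ?_ (ENNReal.tsum_le_tsum hle)
    rw [this]
    exact ENNReal.ofReal_ne_top
  have hae : ∀ᵐ ω ∂ℙ, ∑' k, ENNReal.ofReal (d k ω) < ⊤ := by
    refine ae_lt_top (Measurable.ennreal_tsum fun k => (hd_meas k).ennreal_ofReal) hG
  set Y : Ω → ℝ := fun ω => (Filter.limsup (fun k => ENNReal.ofReal (B k ω)) atTop).toReal
    with hY
  have hYmeas : Measurable Y := by
    apply Measurable.ennreal_toReal
    have : (fun ω => Filter.limsup (fun k => ENNReal.ofReal (B k ω)) atTop)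
        = fun ω => ⨅ n, ⨆ i, ⨆ (_ : i ≥ n), ENNReal.ofReal (B i ω) := by
      funext ω
      exact limsup_eq_iInf_iSup_of_nat
    rw [this]
    refine Measurable.iInf fun n => ?_
    refine Measurable.iSup fun i => ?_
    refine Measurable.iSup fun _ => ?_
    exact (measurable_Av X hmeas _).ennreal_ofReal
  have hY01 : ∀ ω, 0 ≤ Y ω ∧ Y ω ≤ 1 := by
    intro ω
    refine ⟨ENNReal.toReal_nonneg, ?_⟩
    have hle : Filter.limsup (fun k => ENNReal.ofReal (B k ω)) atTop ≤ 1 := by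
      refine Filter.limsup_le_of_le (by isBoundedDefault) ?_
      refine Filter.Eventually.of_forall fun k => ?_
      exact ENNReal.ofReal_le_one.2 (Av_le_one X hBer _ ω)
    calc Y ω ≤ (1 : ENNReal).toReal := ENNReal.toReal_mono (by norm_num) hle
      _ = 1 := by simp
  refine ⟨Y, hYmeas, hY01, ?_⟩
  filter_upwards [hae] with ω hω
  have hsummable : Summable fun k => d k ω := by
    have := ENNReal.summable_toReal hω.ne
    refine this.congr fun k => ?_
    rw [ENNReal.toReal_ofReal (abs_nonneg _)]
  have hcauchy : CauchySeq fun k => B k ω := by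
    refine cauchySeq_of_summable_dist ?_
    refine hsummable.congr fun k => ?_
    rw [Real.dist_eq]
  obtain ⟨L, hL⟩ := cauchySeq_tendsto_of_complete hcauchy
  have hL0 : 0 ≤ L :=
    ge_of_tendsto hL (Filter.Eventually.of_forall fun k => Av_nonneg X _ ω)
  have hofReal : Tendsto (fun k => ENNReal.ofReal (B k ω)) atTop (𝓝 (ENNReal.ofReal L)) :=
    (ENNReal.continuous_ofReal.tendsto L).comp hL
  have hYω : Y ω = L := by
    rw [hY]
    simp only
    rw [hofReal.limsup_eq, ENNReal.toReal_ofReal hL0]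
  rw [hYω]
  exact hL

end limitvar

section recursion
variable {Ω : Type*} [MeasurableSpace Ω] (ℙ : Measure Ω) [IsProbabilityMeasure ℙ]
  (X : ℕ → Ω → ℕ)

lemma integral_Y_pow (hmem : ∀ s : Finset ℕ,
      ℙ {ω | ∀ l ∈ s, X l ω = 1} = ℙ {ω | ∀ l ∈ Finset.range s.card, X l ω = 1})
    (hmeas : ∀ n, Measurable (X n)) (hBer : ∀ n ω, X n ω = 0 ∨ X n ω = 1)
    {Y : Ω → ℝ} (hYmeas : Measurable Y)
    (hYtend : ∀ᵐ ω ∂ℙ, Tendsto (fun k => Av X (16 ^ k) ω) atTop (𝓝 (Y ω))) (j : ℕ) :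
    ∫ ω, (Y ω) ^ j ∂ℙ = mR ℙ X j := by
  have h1 : Tendsto (fun k => ∫ ω, (Av X (16 ^ k) ω) ^ j ∂ℙ) atTop
      (𝓝 (∫ ω, (Y ω) ^ j ∂ℙ)) := by
    refine tendsto_integral_of_dominated_convergence (fun _ => 1)
      (fun k => ((measurable_Av X hmeas _).pow_const j).aestronglyMeasurable)
      (integrable_const 1) (fun k => Filter.Eventually.of_forall fun ω => ?_) ?_
    · rw [Real.norm_eq_abs, abs_of_nonneg (pow_nonneg (Av_nonneg X _ ω) j)]
      exact pow_le_one₀ (Av_nonneg X _ ω) (Av_le_one X hBer _ ω)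
    · filter_upwards [hYtend] with ω hω
      exact hω.pow j
  have h2 : Tendsto (fun k => ∫ ω, (Av X (16 ^ k) ω) ^ j ∂ℙ) atTop (𝓝 (mR ℙ X j)) :=
    (tendsto_integral_Av_pow ℙ X hmem hmeas hBer j).comp
      (tendsto_pow_atTop_atTop_of_one_lt (by norm_num))
  exact tendsto_nhds_unique h1 h2

def Sig (k α : ℕ) : Fin k → ℕ := fun j => if (j : ℕ) < α then 1 else 0

lemma Sig_01 (k α : ℕ) (j : Fin k) : Sig k α j = 0 ∨ Sig k α j = 1 := by
  rw [Sig]; split <;> simp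

lemma sum_Sig {k α : ℕ} (hα : α ≤ k) : ∑ j, Sig k α j = α := by
  classical
  rw [show ∑ j, Sig k α j = ∑ j : Fin k, (if (j : ℕ) < α then 1 else 0) from rfl]
  have hsb : (∑ j : Fin k, if (j : ℕ) < α then (1 : ℕ) else 0)
      = (Finset.univ.filter (fun j : Fin k => (j : ℕ) < α)).card := by
    rw [Finset.sum_boole]
    simp
  rw [hsb]
  have : Finset.univ.filter (fun j : Fin k => (j : ℕ) < α)
      = (Finset.range α).attachFin (fun m hm => lt_of_lt_of_le (Finset.mem_range.1 hm) hα) := by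
    ext x
    simp [Finset.mem_attachFin, Finset.mem_range]
  rw [this, Finset.card_attachFin, Finset.card_range]

noncomputable def qR (k α : ℕ) : ℝ :=
  (ℙ {ω | ∀ j : Fin k, X (j : ℕ) ω = Sig k α j}).toReal

lemma meas_pattern (hmeas : ∀ n, Measurable (X n)) {k : ℕ} (e : Fin k → ℕ) :
    MeasurableSet {ω | ∀ j : Fin k, X (j : ℕ) ω = e j} := by
  have : {ω | ∀ j : Fin k, X (j : ℕ) ω = e j} = ⋂ j : Fin k, (X (j : ℕ)) ⁻¹' {e j} := by
    ext ω; simp [Set.mem_iInter]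
  rw [this]
  exact MeasurableSet.iInter fun j => hmeas _ (measurableSet_singleton _)

lemma qR_rec
    (hpat : ∀ {k : ℕ} (e e' : Fin k → ℕ), (∀ j, e j = 0 ∨ e j = 1) →
      (∀ j, e' j = 0 ∨ e' j = 1) → ∑ j, e j = ∑ j, e' j →
      ℙ {ω | ∀ j : Fin k, X (j : ℕ) ω = e j} = ℙ {ω | ∀ j : Fin k, X (j : ℕ) ω = e' j})
    (hmeas : ∀ n, Measurable (X n)) (hBer : ∀ n ω, X n ω = 0 ∨ X n ω = 1)
    {k α : ℕ} (hα : α ≤ k) :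
    qR ℙ X k α = qR ℙ X (k + 1) (α + 1) + qR ℙ X (k + 1) α := by
  classical
  set e1 : Fin (k + 1) → ℕ := Fin.snoc (Sig k α) 1 with he1
  set e0 : Fin (k + 1) → ℕ := Fin.snoc (Sig k α) 0 with he0
  have he1_01 : ∀ j, e1 j = 0 ∨ e1 j = 1 := by
    intro j
    refine Fin.lastCases ?_ ?_ j
    · rw [he1, Fin.snoc_last]; right; rfl
    · intro i; rw [he1, Fin.snoc_castSucc]; exact Sig_01 k α i
  have he0_01 : ∀ j, e0 j = 0 ∨ e0 j = 1 := by
    intro j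
    refine Fin.lastCases ?_ ?_ j
    · rw [he0, Fin.snoc_last]; left; rfl
    · intro i; rw [he0, Fin.snoc_castSucc]; exact Sig_01 k α i
  have hsum1 : ∑ j, e1 j = α + 1 := by
    rw [he1, Fin.sum_univ_castSucc]
    simp only [Fin.snoc_castSucc, Fin.snoc_last]
    rw [sum_Sig hα]
  have hsum0 : ∑ j, e0 j = α := by
    rw [he0, Fin.sum_univ_castSucc]
    simp only [Fin.snoc_castSucc, Fin.snoc_last]
    rw [sum_Sig hα]
    omega
  -- decomposition
  have hdecomp : {ω | ∀ j : Fin k, X (j : ℕ) ω = Sig k α j}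
      = {ω | ∀ j : Fin (k + 1), X (j : ℕ) ω = e1 j}
        ∪ {ω | ∀ j : Fin (k + 1), X (j : ℕ) ω = e0 j} := by
    ext ω
    simp only [Set.mem_setOf_eq, Set.mem_union]
    constructor
    · intro h
      rcases hBer k ω with hk | hk
      · right
        intro j
        refine Fin.lastCases ?_ ?_ j
        · rw [he0, Fin.snoc_last]
          simpa using hk
        · intro i
          rw [he0, Fin.snoc_castSucc]
          simpa using h i
      · left
        intro j
        refine Fin.lastCases ?_ ?_ j
        · rw [he1, Fin.snoc_last]
          simpa using hk
        · intro i
          rw [he1, Fin.snoc_castSucc]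
          simpa using h i
    · rintro (h | h) <;>
      · intro i
        have := h (Fin.castSucc i)
        simpa [he1, he0, Fin.snoc_castSucc] using this
  have hdisj : Disjoint {ω | ∀ j : Fin (k + 1), X (j : ℕ) ω = e1 j}
      {ω | ∀ j : Fin (k + 1), X (j : ℕ) ω = e0 j} := by
    rw [Set.disjoint_left]
    intro ω h1 h0
    have ha := h1 (Fin.last k)
    have hb := h0 (Fin.last k)
    rw [he1, Fin.snoc_last] at ha
    rw [he0, Fin.snoc_last] at hb
    rw [ha] at hb
    exact one_ne_zero hb
  have hmeasE1 := meas_pattern X hmeas e1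
  have hmeasE0 := meas_pattern X hmeas e0
  have hP : ℙ {ω | ∀ j : Fin k, X (j : ℕ) ω = Sig k α j}
      = ℙ {ω | ∀ j : Fin (k + 1), X (j : ℕ) ω = e1 j}
        + ℙ {ω | ∀ j : Fin (k + 1), X (j : ℕ) ω = e0 j} := by
    rw [hdecomp]
    exact measure_union hdisj hmeasE0
  have h1 : ℙ {ω | ∀ j : Fin (k + 1), X (j : ℕ) ω = e1 j}
      = ℙ {ω | ∀ j : Fin (k + 1), X (j : ℕ) ω = Sig (k + 1) (α + 1) j} := by
    refine hpat e1 _ he1_01 (Sig_01 _ _) ?_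
    rw [hsum1, sum_Sig (by omega)]
  have h0 : ℙ {ω | ∀ j : Fin (k + 1), X (j : ℕ) ω = e0 j}
      = ℙ {ω | ∀ j : Fin (k + 1), X (j : ℕ) ω = Sig (k + 1) α j} := by
    refine hpat e0 _ he0_01 (Sig_01 _ _) ?_
    rw [hsum0, sum_Sig (by omega)]
  rw [qR, qR, qR, hP, h1, h0, ENNReal.toReal_add (measure_ne_top _ _) (measure_ne_top _ _)]

lemma integral_Y_basis
    (hmem : ∀ s : Finset ℕ,
      ℙ {ω | ∀ l ∈ s, X l ω = 1} = ℙ {ω | ∀ l ∈ Finset.range s.card, X l ω = 1})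
    (hpat : ∀ {k : ℕ} (e e' : Fin k → ℕ), (∀ j, e j = 0 ∨ e j = 1) →
      (∀ j, e' j = 0 ∨ e' j = 1) → ∑ j, e j = ∑ j, e' j →
      ℙ {ω | ∀ j : Fin k, X (j : ℕ) ω = e j} = ℙ {ω | ∀ j : Fin k, X (j : ℕ) ω = e' j})
    (hmeas : ∀ n, Measurable (X n)) (hBer : ∀ n ω, X n ω = 0 ∨ X n ω = 1)
    {Y : Ω → ℝ} (hYmeas : Measurable Y) (hY01 : ∀ ω, 0 ≤ Y ω ∧ Y ω ≤ 1)
    (hYtend : ∀ᵐ ω ∂ℙ, Tendsto (fun k => Av X (16 ^ k) ω) atTop (𝓝 (Y ω))) :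
    ∀ (d α : ℕ), ∫ ω, (Y ω) ^ α * (1 - Y ω) ^ d ∂ℙ = qR ℙ X (α + d) α := by
  have hint : ∀ a b : ℕ, Integrable (fun ω => (Y ω) ^ a * (1 - Y ω) ^ b) ℙ := by
    intro a b
    refine integrable_of_bdd ℙ ((hYmeas.pow_const a).mul
      ((measurable_const.sub hYmeas).pow_const b)) 1 ?_
    intro ω
    have h1 := (hY01 ω).1
    have h2 := (hY01 ω).2
    rw [abs_of_nonneg (mul_nonneg (pow_nonneg h1 a) (pow_nonneg (by linarith) b))]
    have hb1 : (Y ω) ^ a ≤ 1 := pow_le_one₀ h1 h2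
    have hb2 : (1 - Y ω) ^ b ≤ 1 := pow_le_one₀ (by linarith) (by linarith)
    have := mul_le_mul hb1 hb2 (pow_nonneg (by linarith) b) zero_le_one
    simpa using this
  intro d
  induction d with
  | zero =>
    intro α
    have hqm : qR ℙ X α α = mR ℙ X α := by
      rw [qR, mR]
      congr 1
      apply congrArg
      ext ω
      simp only [Set.mem_setOf_eq, Sig]
      constructor
      · intro h l hl
        have hlα : l < α := Finset.mem_range.1 hl
        have := h ⟨l, hlα⟩
        simpa [hlα] using this
      · intro h j
        have hj : (j : ℕ) < α := j.2
        simp only [hj, if_true]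
        exact h (j : ℕ) (Finset.mem_range.2 hj)
    rw [Nat.add_zero, hqm, ← integral_Y_pow ℙ X hmem hmeas hBer hYmeas hYtend α]
    refine integral_congr_ae (Filter.Eventually.of_forall fun ω => ?_)
    simp
  | succ d ih =>
    intro α
    have hpt : ∀ ω, (Y ω) ^ α * (1 - Y ω) ^ (d + 1)
        = (Y ω) ^ α * (1 - Y ω) ^ d - (Y ω) ^ (α + 1) * (1 - Y ω) ^ d := by
      intro ω; ring
    rw [integral_congr_ae (Filter.Eventually.of_forall hpt),
      integral_sub (hint α d) (hint (α + 1) d), ih α, ih (α + 1)]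
    have hrec := qR_rec ℙ X hpat hmeas hBer (show α ≤ α + d by omega)
    have h1 : α + 1 + d = α + d + 1 := by omega
    have h2 : α + (d + 1) = α + d + 1 := by omega
    rw [h1, h2]
    linarith [hrec]
end recursion


lemma integrable_cm (μ : Measure (Set.Icc (0:ℝ) 1)) [IsProbabilityMeasure μ]
    (g : C(Set.Icc (0:ℝ) 1, ℝ)) : Integrable (fun p => g p) μ := by
  refine (integrable_const (‖g‖)).mono' g.continuous.measurable.aestronglyMeasurable ?_
  exact Filter.Eventually.of_forall fun p => g.norm_coe_le_norm p

lemma unique_from_moments (μ ν : Measure (Set.Icc (0:ℝ) 1))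
    [IsProbabilityMeasure μ] [IsProbabilityMeasure ν]
    (h : ∀ α d : ℕ, ∫ p : Set.Icc (0:ℝ) 1, (p : ℝ) ^ α * (1 - (p : ℝ)) ^ d ∂μ
      = ∫ p : Set.Icc (0:ℝ) 1, (p : ℝ) ^ α * (1 - (p : ℝ)) ^ d ∂ν) :
    μ = ν := by
  have hbasis_int : ∀ (κ : Measure (Set.Icc (0:ℝ) 1)) [IsProbabilityMeasure κ] (α d : ℕ),
      Integrable (fun p : Set.Icc (0:ℝ) 1 => (p : ℝ) ^ α * (1 - (p : ℝ)) ^ d) κ := by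
    intro κ _ α d
    exact integrable_cm κ ⟨fun p => (p : ℝ) ^ α * (1 - (p : ℝ)) ^ d,
      ((continuous_subtype_val.pow α).mul ((continuous_const.sub continuous_subtype_val).pow d))⟩
  have hBern : ∀ n k : ℕ,
      ∫ p, (bernstein n k) p ∂μ = ∫ p, (bernstein n k) p ∂ν := by
    intro n k
    have hfun : ∀ p : Set.Icc (0:ℝ) 1, (bernstein n k) p
        = (n.choose k : ℝ) * ((p : ℝ) ^ k * (1 - (p : ℝ)) ^ (n - k)) := by
      intro p
      rw [bernstein_apply]
      ring
    rw [integral_congr_ae (Filter.Eventually.of_forall hfun),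
      integral_congr_ae (Filter.Eventually.of_forall hfun),
      integral_const_mul, integral_const_mul, h k (n - k)]
  have happrox : ∀ (f : C(Set.Icc (0:ℝ) 1, ℝ)) (n : ℕ),
      ∫ p, (bernsteinApproximation n f) p ∂μ = ∫ p, (bernsteinApproximation n f) p ∂ν := by
    intro f n
    have hsum : ∀ p : Set.Icc (0:ℝ) 1, (bernsteinApproximation n f) p
        = ∑ k : Fin (n + 1), f (bernstein.z k) * (bernstein n k) p := by
      intro p
      rw [bernsteinApproximation]
      simp [ContinuousMap.coe_sum, Finset.sum_apply, mul_comm]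
    rw [integral_congr_ae (Filter.Eventually.of_forall hsum),
      integral_congr_ae (Filter.Eventually.of_forall hsum)]
    rw [integral_finset_sum, integral_finset_sum]
    · refine Finset.sum_congr rfl fun k _ => ?_
      rw [integral_const_mul, integral_const_mul, hBern n k]
    · intro k _
      exact (integrable_cm ν (bernstein n k)).const_mul _
    · intro k _
      exact (integrable_cm μ (bernstein n k)).const_mul _
  have hconv : ∀ (κ : Measure (Set.Icc (0:ℝ) 1)) [IsProbabilityMeasure κ]
      (f : C(Set.Icc (0:ℝ) 1, ℝ)),
      Tendsto (fun n => ∫ p, (bernsteinApproximation n f) p ∂κ) atTop (𝓝 (∫ p, f p ∂κ)) := by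
    intro κ _ f
    rw [tendsto_iff_dist_tendsto_zero]
    have hb : Tendsto (fun n => dist (bernsteinApproximation n f) f) atTop (𝓝 0) := by
      rw [← tendsto_iff_dist_tendsto_zero]
      exact bernsteinApproximation_uniform f
    refine squeeze_zero (fun n => dist_nonneg) (fun n => ?_) hb
    rw [Real.dist_eq, ← integral_sub (integrable_cm κ _) (integrable_cm κ f)]
    calc |∫ p, ((bernsteinApproximation n f) p - f p) ∂κ|
        ≤ ∫ p, |(bernsteinApproximation n f) p - f p| ∂κ := by
          simpa [Real.norm_eq_abs] using norm_integral_le_integral_norm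
            (μ := κ) (f := fun p => (bernsteinApproximation n f) p - f p)
      _ ≤ ∫ _p, dist (bernsteinApproximation n f) f ∂κ := by
          refine integral_mono ((integrable_cm κ _).sub (integrable_cm κ f)).abs
            (integrable_const _) fun p => ?_
          calc |(bernsteinApproximation n f) p - f p|
              = ‖(bernsteinApproximation n f - f) p‖ := by
                rw [ContinuousMap.sub_apply, Real.norm_eq_abs]
            _ ≤ ‖bernsteinApproximation n f - f‖ :=
                ContinuousMap.norm_coe_le_norm _ p
            _ = dist (bernsteinApproximation n f) f := by rw [dist_eq_norm]
      _ = dist (bernsteinApproximation n f) f := by simp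
  have hcont : ∀ f : C(Set.Icc (0:ℝ) 1, ℝ), ∫ p, f p ∂μ = ∫ p, f p ∂ν := by
    intro f
    refine tendsto_nhds_unique ?_ (hconv ν f)
    have := hconv μ f
    refine this.congr fun n => happrox f n
  refine ext_of_forall_lintegral_eq_of_IsFiniteMeasure fun f => ?_
  have hg : Continuous fun p : Set.Icc (0:ℝ) 1 => ((f p : ℝ≥0) : ℝ) :=
    NNReal.continuous_coe.comp f.continuous
  have hint1 : Integrable (fun p => ((f p : ℝ≥0) : ℝ)) μ := integrable_cm μ ⟨_, hg⟩
  have hint2 : Integrable (fun p => ((f p : ℝ≥0) : ℝ)) ν := integrable_cm ν ⟨_, hg⟩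
  rw [lintegral_coe_eq_integral _ hint1, lintegral_coe_eq_integral _ hint2]
  congr 1
  exact hcont ⟨_, hg⟩


end DFA

/-- **de Finetti's theorem** for an exchangeable sequence of Bernoulli random variables:
there is a unique Borel probability measure `μ` on `[0,1]` such that for every `k` and every
`e₁, …, e_k ∈ {0,1}`, with `α = e₁ + ⋯ + e_k`,
`ℙ(X₁ = e₁, …, X_k = e_k) = ∫ p^α (1-p)^(k-α) dμ(p)`. -/
theorem deFinetti {Ω : Type*} [MeasurableSpace Ω] (ℙ : Measure Ω) [IsProbabilityMeasure ℙ]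
    (X : ℕ → Ω → ℕ) (hmeas : ∀ n, Measurable (X n))
    (hBer : ∀ n ω, X n ω = 0 ∨ X n ω = 1)
    (hexch : Exchangeable ℙ X) :
    ∃! μ : Measure (Set.Icc (0 : ℝ) 1), IsProbabilityMeasure μ ∧
      ∀ (k : ℕ) (e : Fin k → ℕ), (∀ j, e j = 0 ∨ e j = 1) →
        (ℙ {ω | ∀ j : Fin k, X (j : ℕ) ω = e j}).toReal =
          ∫ p : Set.Icc (0 : ℝ) 1,
            (p : ℝ) ^ (∑ j, e j) * (1 - (p : ℝ)) ^ (k - ∑ j, e j) ∂μ := by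
  classical
  open DFA in
  have hmem : ∀ s : Finset ℕ,
      ℙ {ω | ∀ l ∈ s, X l ω = 1} = ℙ {ω | ∀ l ∈ Finset.range s.card, X l ω = 1} :=
    DFA.mem_prob ℙ X hmeas hexch
  have hpat : ∀ {k : ℕ} (e e' : Fin k → ℕ), (∀ j, e j = 0 ∨ e j = 1) →
      (∀ j, e' j = 0 ∨ e' j = 1) → ∑ j, e j = ∑ j, e' j →
      ℙ {ω | ∀ j : Fin k, X (j : ℕ) ω = e j} = ℙ {ω | ∀ j : Fin k, X (j : ℕ) ω = e' j} :=
    fun e e' h1 h2 h3 => DFA.pattern_sum ℙ X hmeas hexch e e' h1 h2 h3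
  obtain ⟨Y, hYmeas, hY01, hYtend⟩ := DFA.exists_limit_var ℙ X hmem hmeas hBer
  set Ysub : Ω → Set.Icc (0 : ℝ) 1 := fun ω => ⟨Y ω, (hY01 ω).1, (hY01 ω).2⟩ with hYsubdef
  have hYsubMeas : Measurable Ysub := hYmeas.subtype_mk
  set μ : Measure (Set.Icc (0 : ℝ) 1) := Measure.map Ysub ℙ with hμdef
  haveI hμprob : IsProbabilityMeasure μ := Measure.isProbabilityMeasure_map hYsubMeas.aemeasurable
  have hmapint : ∀ α d : ℕ,
      ∫ p : Set.Icc (0 : ℝ) 1, (p : ℝ) ^ α * (1 - (p : ℝ)) ^ d ∂μ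
        = ∫ ω, (Y ω) ^ α * (1 - Y ω) ^ d ∂ℙ := by
    intro α d
    have hg : Continuous fun p : Set.Icc (0 : ℝ) 1 => (p : ℝ) ^ α * (1 - (p : ℝ)) ^ d :=
      (continuous_subtype_val.pow α).mul ((continuous_const.sub continuous_subtype_val).pow d)
    rw [hμdef, integral_map hYsubMeas.aemeasurable hg.aestronglyMeasurable]
  have hμprop : ∀ (k : ℕ) (e : Fin k → ℕ), (∀ j, e j = 0 ∨ e j = 1) →
      (ℙ {ω | ∀ j : Fin k, X (j : ℕ) ω = e j}).toReal =
        ∫ p : Set.Icc (0 : ℝ) 1,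
          (p : ℝ) ^ (∑ j, e j) * (1 - (p : ℝ)) ^ (k - ∑ j, e j) ∂μ := by
    intro k e he
    have hsum_le : ∑ j, e j ≤ k := by
      calc ∑ j, e j ≤ ∑ _j : Fin k, 1 := Finset.sum_le_sum fun j _ => by
            rcases he j with h | h <;> omega
        _ = k := by simp
    have hq : (ℙ {ω | ∀ j : Fin k, X (j : ℕ) ω = e j}).toReal
        = DFA.qR ℙ X k (∑ j, e j) := by
      rw [DFA.qR]
      refine congrArg ENNReal.toReal ?_
      refine hpat e (DFA.Sig k (∑ j, e j)) he (DFA.Sig_01 _ _) ?_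
      rw [DFA.sum_Sig hsum_le]
    rw [hq, hmapint (∑ j, e j) (k - ∑ j, e j),
      DFA.integral_Y_basis ℙ X hmem hpat hmeas hBer hYmeas hY01 hYtend (k - ∑ j, e j) (∑ j, e j)]
    congr 1
    omega
  have hmom : ∀ (κ : Measure (Set.Icc (0 : ℝ) 1)),
      (∀ (k : ℕ) (e : Fin k → ℕ), (∀ j, e j = 0 ∨ e j = 1) →
        (ℙ {ω | ∀ j : Fin k, X (j : ℕ) ω = e j}).toReal =
          ∫ p : Set.Icc (0 : ℝ) 1,
            (p : ℝ) ^ (∑ j, e j) * (1 - (p : ℝ)) ^ (k - ∑ j, e j) ∂κ) →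
      ∀ α d : ℕ, ∫ p : Set.Icc (0 : ℝ) 1, (p : ℝ) ^ α * (1 - (p : ℝ)) ^ d ∂κ
        = DFA.qR ℙ X (α + d) α := by
    intro κ hκ α d
    have h := hκ (α + d) (DFA.Sig (α + d) α) (DFA.Sig_01 _ _)
    rw [DFA.sum_Sig (by omega : α ≤ α + d)] at h
    rw [show α + d - α = d by omega] at h
    rw [← h, DFA.qR]
  refine ⟨μ, ⟨hμprob, hμprop⟩, ?_⟩
  rintro ν ⟨hν1, hν2⟩
  haveI := hν1
  refine DFA.unique_from_moments ν μ fun α d => ?_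
  rw [hmom ν hν2 α d, hmom μ hμprop α d]
end

section
/- Let X₁, …, X_N be an exchangeable finite collection of Bernoulli random variables on a probability space (Ω, ℱ, ℙ), and let i ∈ ℕ with i ≤ N and ℙ(X₁ + ⋯ + X_N = i) > 0. Then for every tuple (u₁, …, u_N) ∈ {0,1}^N with u₁ + ⋯ + u_N = i, the conditional probability ℙ(X₁ = u₁, …, X_N = u_N | X₁ + ⋯ + X_N = i) equals 1 / C(N, i). -/
open MeasureTheory

/-- A finite collection `X₁, …, X_N` of random variables is *exchangeable* if the joint
distribution of `(X₁, …, X_N)` is invariant under every permutation of the indices. -/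
def FinExchangeable {Ω : Type*} [MeasurableSpace Ω] (ℙ : Measure Ω) {N : ℕ}
    (X : Fin N → Ω → ℕ) : Prop :=
  ∀ σ : Equiv.Perm (Fin N),
    Measure.map (fun ω (j : Fin N) => X (σ j) ω) ℙ =
      Measure.map (fun ω (j : Fin N) => X j ω) ℙ

lemma sum_eq_card_filter {N : ℕ} (u : Fin N → ℕ) (hu : ∀ j, u j = 0 ∨ u j = 1) :
    (∑ j, u j) = (Finset.univ.filter fun j => u j = 1).card := by
  rw [Finset.card_filter]
  apply Finset.sum_congr rfl
  intro j _
  rcases hu j with h | h <;> simp [h]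

lemma exists_perm {N : ℕ} (u v : Fin N → ℕ) (hu : ∀ j, u j = 0 ∨ u j = 1)
    (hv : ∀ j, v j = 0 ∨ v j = 1) (h : (∑ j, u j) = ∑ j, v j) :
    ∃ σ : Equiv.Perm (Fin N), ∀ j, v (σ j) = u j := by
  classical
  have hcard : Fintype.card {j // u j = 1} = Fintype.card {j // v j = 1} := by
    simp only [Fintype.card_subtype]
    rw [← sum_eq_card_filter u hu, ← sum_eq_card_filter v hv, h]
  have hcard' : Fintype.card {j // ¬ u j = 1} = Fintype.card {j // ¬ v j = 1} := by
    rw [Fintype.card_subtype_compl, Fintype.card_subtype_compl, hcard]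
  let e := Fintype.equivOfCardEq hcard
  let e' := Fintype.equivOfCardEq hcard'
  refine ⟨(Equiv.sumCompl (fun j => u j = 1)).symm.trans
    ((e.sumCongr e').trans (Equiv.sumCompl (fun j => v j = 1))), ?_⟩
  intro j
  by_cases hj : u j = 1
  · have : v ((Equiv.sumCompl (fun j => v j = 1)) (Sum.inl (e ⟨j, hj⟩))) = 1 :=
      (e ⟨j, hj⟩).2
    simpa [hj, Equiv.sumCompl_symm_apply_of_pos hj] using this
  · have h0 : u j = 0 := (hu j).resolve_right hj
    have : ¬ v ((Equiv.sumCompl (fun j => v j = 1)) (Sum.inr (e' ⟨j, hj⟩))) = 1 :=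
      (e' ⟨j, hj⟩).2
    have hv0 : v ((Equiv.sumCompl (fun j => v j = 1)) (Sum.inr (e' ⟨j, hj⟩))) = 0 :=
      (hv _).resolve_right this
    simpa [h0, Equiv.sumCompl_symm_apply_of_neg hj] using hv0

lemma prob_tuple_eq {Ω : Type*} [MeasurableSpace Ω] (ℙ : Measure Ω) {N : ℕ}
    (X : Fin N → Ω → ℕ) (hmeas : ∀ j, Measurable (X j)) (hexch : FinExchangeable ℙ X)
    (u v : Fin N → ℕ) (σ : Equiv.Perm (Fin N)) (hσ : ∀ j, v (σ j) = u j) :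
    ℙ {ω | ∀ j, X j ω = v j} = ℙ {ω | ∀ j, X j ω = u j} := by
  have hS : MeasurableSet (Set.univ.pi fun j : Fin N => ({u j} : Set ℕ)) :=
    MeasurableSet.univ_pi fun j => measurableSet_singleton _
  have hXm : Measurable (fun ω (j : Fin N) => X j ω) :=
    measurable_pi_lambda _ hmeas
  have hXσm : Measurable (fun ω (j : Fin N) => X (σ j) ω) :=
    measurable_pi_lambda _ fun j => hmeas (σ j)
  have h2 : Measure.map (fun ω (j : Fin N) => X (σ j) ω) ℙ
      (Set.univ.pi fun j : Fin N => ({u j} : Set ℕ)) =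
      Measure.map (fun ω (j : Fin N) => X j ω) ℙ
      (Set.univ.pi fun j : Fin N => ({u j} : Set ℕ)) := by rw [hexch σ]
  rw [Measure.map_apply hXσm hS, Measure.map_apply hXm hS] at h2
  have e1 : (fun ω (j : Fin N) => X (σ j) ω) ⁻¹'
      (Set.univ.pi fun j : Fin N => ({u j} : Set ℕ)) = {ω | ∀ j, X j ω = v j} := by
    ext ω
    simp only [Set.mem_preimage, Set.mem_pi, Set.mem_univ, Set.mem_singleton_iff,
      forall_true_left, Set.mem_setOf_eq]
    constructor
    · intro h k
      have := h (σ.symm k)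
      rwa [Equiv.apply_symm_apply, ← hσ (σ.symm k), Equiv.apply_symm_apply] at this
    · intro h j
      rw [h (σ j), hσ j]
  have e2 : (fun ω (j : Fin N) => X j ω) ⁻¹'
      (Set.univ.pi fun j : Fin N => ({u j} : Set ℕ)) = {ω | ∀ j, X j ω = u j} := by
    ext ω
    simp [Set.mem_pi]
  rw [e1, e2] at h2
  exact h2

/-- For an exchangeable collection of `N` Bernoulli random variables, conditionally on
`X₁ + ⋯ + X_N = i`, each `{0,1}`-tuple `(u₁, …, u_N)` with `u₁ + ⋯ + u_N = i` occurs with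
probability `1 / C(N, i)`. -/
theorem cond_prob_eq_one_div_choose {Ω : Type*} [MeasurableSpace Ω] (ℙ : Measure Ω)
    [IsProbabilityMeasure ℙ] {N : ℕ} (X : Fin N → Ω → ℕ)
    (hmeas : ∀ j, Measurable (X j)) (hBer : ∀ j ω, X j ω = 0 ∨ X j ω = 1)
    (hexch : FinExchangeable ℙ X)
    (i : ℕ) (hi : i ≤ N) (hpos : 0 < ℙ {ω | (∑ j, X j ω) = i})
    (u : Fin N → ℕ) (hu : ∀ j, u j = 0 ∨ u j = 1) (hsum : (∑ j, u j) = i) :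
    (ProbabilityTheory.cond ℙ {ω | (∑ j, X j ω) = i} {ω | ∀ j, X j ω = u j}).toReal =
      1 / (N.choose i : ℝ) := by
  classical
  set A := {ω | ∀ j, X j ω = u j} with hA
  set B := {ω | (∑ j, X j ω) = i} with hB
  have hBmeas : MeasurableSet B := by
    have : B = (fun ω => ∑ j, X j ω) ⁻¹' {i} := by ext ω; simp [hB]
    rw [this]
    exact (Finset.measurable_sum _ fun j _ => hmeas j) (measurableSet_singleton _)
  -- events indexed by finsets
  let E : Finset (Fin N) → Set Ω := fun s => {ω | ∀ j, X j ω = if j ∈ s then 1 else 0}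
  have hEmeas : ∀ s, MeasurableSet (E s) := by
    intro s
    have : E s = ⋂ j, X j ⁻¹' {if j ∈ s then 1 else 0} := by
      ext ω; simp [E]
    rw [this]
    exact MeasurableSet.iInter fun j => (hmeas j) (measurableSet_singleton _)
  have hAmeas : MeasurableSet A := by
    have : A = ⋂ j, X j ⁻¹' {u j} := by ext ω; simp [hA]
    rw [this]
    exact MeasurableSet.iInter fun j => (hmeas j) (measurableSet_singleton _)
  have hAB : A ⊆ B := by
    intro ω hω
    simp only [hB, Set.mem_setOf_eq]
    rw [Finset.sum_congr rfl fun j _ => hω j, hsum]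
  -- each event has the same probability as A
  have hE_eq : ∀ s ∈ Finset.univ.powersetCard i, ℙ (E s) = ℙ A := by
    intro s hs
    have hcard : s.card = i := (Finset.mem_powersetCard.mp hs).2
    have hv : ∀ j, (if j ∈ s then 1 else 0 : ℕ) = 0 ∨ (if j ∈ s then 1 else 0 : ℕ) = 1 := by
      intro j; by_cases h : j ∈ s <;> simp [h]
    have hsum' : (∑ j, u j) = ∑ j, (if j ∈ s then 1 else 0 : ℕ) := by
      rw [hsum, Finset.sum_ite_mem, Finset.univ_inter, Finset.sum_const, hcard]
      simp
    obtain ⟨σ, hσ⟩ := exists_perm u (fun j => if j ∈ s then 1 else 0) hu hv hsum'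
    exact prob_tuple_eq ℙ X hmeas hexch u _ σ hσ
  -- decomposition of B
  have hB_eq : B = ⋃ s ∈ Finset.univ.powersetCard i, E s := by
    ext ω
    simp only [Set.mem_iUnion, exists_prop]
    constructor
    · intro hω
      refine ⟨Finset.univ.filter fun j => X j ω = 1, ?_, ?_⟩
      · rw [Finset.mem_powersetCard]
        exact ⟨Finset.subset_univ _, by
          rw [← sum_eq_card_filter (fun j => X j ω) (fun j => hBer j ω)]; exact hω⟩
      · intro j
        simp only [Finset.mem_filter, Finset.mem_univ, true_and]
        rcases hBer j ω with h | h <;> simp [h]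
    · rintro ⟨s, hs, hω⟩
      have hcard : s.card = i := (Finset.mem_powersetCard.mp hs).2
      show (∑ j, X j ω) = i
      rw [Finset.sum_congr rfl fun j _ => hω j, Finset.sum_ite_mem, Finset.univ_inter,
        Finset.sum_const, hcard]
      simp
  -- disjointness
  have hdisj : (((Finset.univ.powersetCard i : Finset (Finset (Fin N)))) : Set (Finset (Fin N))).PairwiseDisjoint E := by
    intro s _ t _ hst
    rw [Function.onFun, Set.disjoint_left]
    intro ω hωs hωt
    apply hst
    ext j
    have h1 := hωs j
    have h2 := hωt j
    by_cases hjs : j ∈ s <;> by_cases hjt : j ∈ t <;> simp_all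
  have hBmeasure : ℙ B = (N.choose i : ENNReal) * ℙ A := by
    rw [hB_eq, measure_biUnion_finset hdisj fun s _ => hEmeas s,
      Finset.sum_congr rfl hE_eq, Finset.sum_const, Finset.card_powersetCard,
      Finset.card_univ, Fintype.card_fin, nsmul_eq_mul]
  have hApos : ℙ A ≠ 0 := by
    intro h
    rw [hBmeasure, h, mul_zero] at hpos
    exact lt_irrefl 0 hpos
  have hAfin : ℙ A ≠ ⊤ := measure_ne_top ℙ A
  have hc0 : (N.choose i : ENNReal) ≠ 0 := by
    exact_mod_cast (Nat.choose_pos hi).ne'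
  have hctop : (N.choose i : ENNReal) ≠ ⊤ := ENNReal.natCast_ne_top _
  rw [ProbabilityTheory.cond_apply hBmeas, Set.inter_eq_self_of_subset_right hAB,
    hBmeasure, ENNReal.mul_inv (Or.inl hc0) (Or.inl hctop), mul_assoc,
    ENNReal.inv_mul_cancel hApos hAfin, mul_one, ENNReal.toReal_inv]
  simp
end

section
/- Let X₁, …, X_N be an exchangeable finite collection of Bernoulli random variables on a probability space (Ω, ℱ, ℙ), let k ∈ ℕ with k ≤ N, let e₁, …, e_k ∈ {0,1} with α = e₁ + ⋯ + e_k, and let i ∈ ℕ with i ≤ N and ℙ(X₁ + ⋯ + X_N = i) > 0. Then ℙ(X₁ = e₁, …, X_k = e_k | X₁ + ⋯ + X_N = i) = C(N − k, i − α) / C(N, i), where C(N − k, i − α) is interpreted as 0 when i < α or i − α > N − k. -/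
open MeasureTheory

section Aux


lemma exists_perm_mem_iff {n : ℕ} {s t : Finset (Fin n)} (h : s.card = t.card) :
    ∃ σ : Equiv.Perm (Fin n), ∀ x, σ x ∈ s ↔ x ∈ t := by
  classical
  have hc : tᶜ.card = sᶜ.card := by simp [Finset.card_compl, h]
  let e1 : {x // x ∈ t} ≃ {x // x ∈ s} := Finset.equivOfCardEq h.symm
  let e2 : {x // ¬ x ∈ t} ≃ {x // ¬ x ∈ s} :=
    ((Equiv.subtypeEquivRight (fun x => (Finset.mem_compl (s := t)).symm)).trans
      (Finset.equivOfCardEq hc)).trans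
      (Equiv.subtypeEquivRight (fun x => Finset.mem_compl))
  refine ⟨((Equiv.sumCompl (· ∈ t)).symm.trans
      ((e1.sumCongr e2).trans (Equiv.sumCompl (· ∈ s)))), fun x => ?_⟩
  by_cases hx : x ∈ t
  · simp only [Equiv.trans_apply]
    rw [Equiv.sumCompl_symm_apply_of_pos hx]
    simp [hx, (e1 ⟨x, hx⟩).2]
  · simp only [Equiv.trans_apply]
    rw [Equiv.sumCompl_symm_apply_of_neg hx]
    simp [hx, (e2 ⟨x, hx⟩).2]

end Aux

/-- For an exchangeable collection of `N` Bernoulli random variables, with `α = e₁ + ⋯ + e_k`,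
`ℙ(X₁ = e₁, …, X_k = e_k | X₁ + ⋯ + X_N = i) = C(N-k, i-α) / C(N, i)`, where `C(N-k, i-α)`
is interpreted as `0` when `i < α` or `i - α > N - k`. -/
theorem cond_prob_eq_choose_div_choose {Ω : Type*} [MeasurableSpace Ω] (ℙ : Measure Ω)
    [IsProbabilityMeasure ℙ] {N : ℕ} (X : Fin N → Ω → ℕ)
    (hmeas : ∀ j, Measurable (X j)) (hBer : ∀ j ω, X j ω = 0 ∨ X j ω = 1)
    (hexch : FinExchangeable ℙ X)
    (k : ℕ) (hk : k ≤ N) (e : Fin k → ℕ) (he : ∀ j, e j = 0 ∨ e j = 1)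
    (α : ℕ) (hα : α = ∑ j, e j)
    (i : ℕ) (hi : i ≤ N) (hpos : 0 < ℙ {ω | (∑ j, X j ω) = i}) :
    (ProbabilityTheory.cond ℙ {ω | (∑ j, X j ω) = i}
        {ω | ∀ j : Fin k, X (Fin.castLE hk j) ω = e j}).toReal =
      (if α ≤ i then ((N - k).choose (i - α) : ℝ) else 0) / (N.choose i : ℝ) := by
  classical
  set S : Set Ω := {ω | (∑ j, X j ω) = i} with hSdef
  set E : Set Ω := {ω | ∀ j : Fin k, X (Fin.castLE hk j) ω = e j} with hEdef
  set Y : Ω → Fin N → ℕ := fun ω j => X j ω with hYdef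
  have hYm : Measurable Y := measurable_pi_lambda _ hmeas
  set v : Finset (Fin N) → Fin N → ℕ := fun s j => if j ∈ s then 1 else 0 with hvdef
  set Atom : Finset (Fin N) → Set Ω := fun s => {ω | Y ω = v s} with hAtomdef
  have hAtomMeas : ∀ s, MeasurableSet (Atom s) :=
    fun s => hYm (measurableSet_singleton (v s))
  have hvinj : Function.Injective v := by
    intro s t hst
    ext j
    have h := congrFun hst j
    by_cases hjs : j ∈ s <;> by_cases hjt : j ∈ t <;>
      simp [hvdef, hjs, hjt] at h ⊢
  have hmemAtom : ∀ ω, Y ω = v (Finset.univ.filter fun j => X j ω = 1) := by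
    intro ω; funext j
    rcases hBer j ω with h | h <;> simp [hYdef, hvdef, h]
  have hsumv : ∀ s : Finset (Fin N), (∑ j, v s j) = s.card := by
    intro s
    simp [hvdef, Finset.sum_boole, Finset.filter_mem_eq_inter]
  have hsum : ∀ ω, (∑ j, X j ω) = (Finset.univ.filter fun j => X j ω = 1).card := by
    intro ω
    have h1 : (∑ j, X j ω) = ∑ j, v (Finset.univ.filter fun j => X j ω = 1) j :=
      Finset.sum_congr rfl fun j _ => congrFun (hmemAtom ω) j
    rw [h1, hsumv]
  -- exchangeability: atoms with equal card have equal measure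
  have hconst : ∀ s t : Finset (Fin N), s.card = t.card → ℙ (Atom s) = ℙ (Atom t) := by
    intro s t hcard
    obtain ⟨σ, hσ⟩ := exists_perm_mem_iff hcard
    have hvt : ∀ x, v t (σ.symm x) = v s x := by
      intro x
      have hiff : σ.symm x ∈ t ↔ x ∈ s := by
        rw [← hσ (σ.symm x), Equiv.apply_symm_apply]
      simp only [hvdef]
      exact if_congr hiff rfl rfl
    have hvs : ∀ x, v s (σ x) = v t x := by
      intro x
      simp only [hvdef]
      exact if_congr (hσ x) rfl rfl
    have hset : ((fun ω (j : Fin N) => X (σ j) ω) ⁻¹' {v t}) = Atom s := by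
      ext ω
      simp only [Set.mem_preimage, Set.mem_singleton_iff, hAtomdef, Set.mem_setOf_eq,
        funext_iff]
      constructor
      · intro h j
        have h2 := h (σ.symm j)
        rw [Equiv.apply_symm_apply] at h2
        exact h2.trans (hvt j)
      · intro h j
        exact (h (σ j)).trans (hvs j)
    calc ℙ (Atom s)
        = Measure.map (fun ω (j : Fin N) => X (σ j) ω) ℙ {v t} := by
          rw [Measure.map_apply (measurable_pi_lambda _ fun j => hmeas (σ j))
            (measurableSet_singleton _), hset]
      _ = Measure.map (fun ω (j : Fin N) => X j ω) ℙ {v t} := by rw [hexch σ]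
      _ = ℙ (Atom t) := by
          rw [Measure.map_apply (measurable_pi_lambda _ fun j => hmeas j)
            (measurableSet_singleton _)]
          rfl
  -- decomposition of S
  have hSmeas : MeasurableSet S := by
    have hg : Measurable fun ω => ∑ j, X j ω :=
      Finset.measurable_sum Finset.univ fun j _ => hmeas j
    exact hg (measurableSet_singleton i)
  have hdisj : ∀ s t : Finset (Fin N), s ≠ t → Disjoint (Atom s) (Atom t) := by
    intro s t hst
    rw [Set.disjoint_left]
    intro ω h1 h2
    have h1' : Y ω = v s := h1
    have h2' : Y ω = v t := h2
    exact hst (hvinj (h1'.symm.trans h2' ▸ rfl))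
  have hS_decomp : S = ⋃ s ∈ Finset.powersetCard i (Finset.univ : Finset (Fin N)), Atom s := by
    ext ω
    simp only [hSdef, Set.mem_setOf_eq, Set.mem_iUnion, exists_prop,
      Finset.mem_powersetCard_univ, hAtomdef]
    constructor
    · intro h
      exact ⟨Finset.univ.filter fun j => X j ω = 1, by rw [← hsum ω]; exact h, hmemAtom ω⟩
    · rintro ⟨s, hcard, hω⟩
      have h1 : (∑ j, X j ω) = ∑ j, v s j :=
        Finset.sum_congr rfl fun j _ => congrFun (hω : Y ω = v s) j
      rw [h1, hsumv, hcard]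
  obtain ⟨s₀, -, hs₀⟩ :
      ∃ s₀ ⊆ (Finset.univ : Finset (Fin N)), s₀.card = i :=
    Finset.exists_subset_card_eq (by simpa using hi)
  set p : ENNReal := ℙ (Atom s₀) with hpdef
  have hScount : ℙ S = (N.choose i : ENNReal) * p := by
    rw [hS_decomp, measure_biUnion_finset
      (fun s _ t _ hst => hdisj s t hst) (fun s _ => hAtomMeas s)]
    rw [Finset.sum_congr rfl fun s hs => hconst s s₀
      (by rw [Finset.mem_powersetCard_univ] at hs; rw [hs, hs₀])]
    simp [Finset.card_powersetCard, mul_comm, hpdef]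
  -- the prefix sets
  set A : Finset (Fin N) := Finset.univ.image (Fin.castLE hk) with hAdef
  set E₀ : Finset (Fin N) := (Finset.univ.filter fun j => e j = 1).image (Fin.castLE hk)
    with hE₀def
  set T : Finset (Finset (Fin N)) :=
    (Finset.powersetCard i (Finset.univ : Finset (Fin N))).filter
      (fun s => ∀ j : Fin k, (Fin.castLE hk j ∈ s ↔ e j = 1)) with hTdef
  have hcastinj : Function.Injective (Fin.castLE hk) := Fin.castLE_injective hk
  have hα' : α = (Finset.univ.filter fun j => e j = 1).card := by
    rw [hα]
    rw [show (∑ j, e j) = ∑ j, if e j = 1 then 1 else 0 from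
      Finset.sum_congr rfl fun j _ => by rcases he j with h | h <;> simp [h]]
    simp [Finset.sum_boole]
  have hE₀card : E₀.card = α := by
    rw [hE₀def, Finset.card_image_of_injective _ hcastinj, hα']
  have hAcard : A.card = k := by
    rw [hAdef, Finset.card_image_of_injective _ hcastinj]; simp
  have hE₀A : E₀ ⊆ A := by
    rw [hE₀def, hAdef]
    exact Finset.image_subset_image (Finset.filter_subset _ _)
  have hinter : ∀ s ∈ T, s ∩ A = E₀ := by
    intro s hs
    rw [hTdef, Finset.mem_filter] at hs
    ext x
    simp only [Finset.mem_inter, hAdef, hE₀def, Finset.mem_image, Finset.mem_filter,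
      Finset.mem_univ, true_and]
    constructor
    · rintro ⟨hxs, j, rfl⟩
      exact ⟨j, (hs.2 j).mp hxs, rfl⟩
    · rintro ⟨j, hej, rfl⟩
      exact ⟨(hs.2 j).mpr hej, j, rfl⟩
  have hSE_decomp : S ∩ E = ⋃ s ∈ T, Atom s := by
    ext ω
    simp only [Set.mem_inter_iff, hSdef, hEdef, Set.mem_setOf_eq, Set.mem_iUnion,
      exists_prop, hTdef, Finset.mem_filter, Finset.mem_powersetCard_univ, hAtomdef]
    constructor
    · rintro ⟨hsi, hE⟩
      refine ⟨Finset.univ.filter fun j => X j ω = 1,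
        ⟨by rw [← hsum ω]; exact hsi, fun j => ?_⟩, hmemAtom ω⟩
      simp only [Finset.mem_filter, Finset.mem_univ, true_and]
      rw [hE j]
    · rintro ⟨s, ⟨hcard, hcond⟩, hω⟩
      have hωs : Y ω = v s := hω
      constructor
      · have h1 : (∑ j, X j ω) = ∑ j, v s j :=
          Finset.sum_congr rfl fun j _ => congrFun hωs j
        rw [h1, hsumv, hcard]
      · intro j
        have h2 : X (Fin.castLE hk j) ω = v s (Fin.castLE hk j) := congrFun hωs _
        rw [h2]
        rcases he j with h | h
        · have hnot : Fin.castLE hk j ∉ s := fun hm => by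
            have := (hcond j).mp hm; omega
          simp [hvdef, hnot, h]
        · simp [hvdef, (hcond j).mpr h, h]
  have hTcard : T.card = if α ≤ i then (N - k).choose (i - α) else 0 := by
    by_cases hαi : α ≤ i
    · rw [if_pos hαi]
      have hcompl : (Aᶜ : Finset (Fin N)).card = N - k := by
        rw [Finset.card_compl, hAcard]; simp
      have hforward : ∀ s ∈ T, s \ A ∈ Finset.powersetCard (i - α) Aᶜ := by
        intro s hs
        have hcard : s.card = i := by
          rw [hTdef, Finset.mem_filter, Finset.mem_powersetCard_univ] at hs
          exact hs.1
        have h1 := hinter s hs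
        have h2 : (s ∩ A).card + (s \ A).card = s.card :=
          Finset.card_inter_add_card_sdiff s A
        rw [h1, hE₀card, hcard] at h2
        rw [Finset.mem_powersetCard]
        refine ⟨fun x hx => Finset.mem_compl.mpr (Finset.mem_sdiff.mp hx).2, by omega⟩
      have hback : ∀ r ∈ Finset.powersetCard (i - α) Aᶜ, r ∪ E₀ ∈ T := by
        intro r hr
        rw [Finset.mem_powersetCard] at hr
        obtain ⟨hrsub, hrcard⟩ := hr
        have hd : Disjoint r E₀ := Finset.disjoint_left.mpr
          fun x hxr hxE => (Finset.mem_compl.mp (hrsub hxr)) (hE₀A hxE)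
        rw [hTdef, Finset.mem_filter, Finset.mem_powersetCard_univ]
        refine ⟨?_, fun j => ?_⟩
        · rw [Finset.card_union_of_disjoint hd, hrcard, hE₀card]; omega
        · have hjA : Fin.castLE hk j ∈ A := by
            rw [hAdef]; exact Finset.mem_image_of_mem _ (Finset.mem_univ j)
          have hjr : Fin.castLE hk j ∉ r := fun hm => (Finset.mem_compl.mp (hrsub hm)) hjA
          have hjE : Fin.castLE hk j ∈ E₀ ↔ e j = 1 := by
            rw [hE₀def]
            constructor
            · intro hm
              obtain ⟨j', hj', heq⟩ := Finset.mem_image.mp hm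
              obtain ⟨-, h1⟩ := Finset.mem_filter.mp hj'
              rw [← hcastinj heq]; exact h1
            · intro h1
              exact Finset.mem_image_of_mem _
                (Finset.mem_filter.mpr ⟨Finset.mem_univ _, h1⟩)
          simp [Finset.mem_union, hjr, hjE]
      have hleft : ∀ s ∈ T, (s \ A) ∪ E₀ = s := by
        intro s hs
        rw [← hinter s hs]
        exact Finset.sdiff_union_inter s A
      have hright : ∀ r ∈ Finset.powersetCard (i - α) Aᶜ, (r ∪ E₀) \ A = r := by
        intro r hr
        rw [Finset.mem_powersetCard] at hr
        have h1 : E₀ \ A = ∅ := Finset.sdiff_eq_empty_iff_subset.mpr hE₀A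
        have h2 : r \ A = r := Finset.sdiff_eq_self_iff_disjoint.mpr
          (Finset.disjoint_left.mpr fun x hxr hxA => Finset.mem_compl.mp (hr.1 hxr) hxA)
        rw [Finset.union_sdiff_distrib, h1, h2, Finset.union_empty]
      rw [Finset.card_bij' (fun s _ => s \ A) (fun r _ => r ∪ E₀)
        hforward hback hleft hright, Finset.card_powersetCard, hcompl]
    · rw [if_neg hαi, Finset.card_eq_zero, Finset.eq_empty_iff_forall_notMem]
      intro s hs
      have hcard : s.card = i := by
        rw [hTdef, Finset.mem_filter, Finset.mem_powersetCard_univ] at hs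
        exact hs.1
      have h1 := hinter s hs
      have h2 : E₀.card ≤ s.card := by
        rw [← h1]; exact Finset.card_le_card Finset.inter_subset_left
      rw [hE₀card, hcard] at h2
      exact hαi h2
  have hSEcount : ℙ (S ∩ E) = (T.card : ENNReal) * p := by
    rw [hSE_decomp, measure_biUnion_finset
      (fun s _ t _ hst => hdisj s t hst) (fun s _ => hAtomMeas s)]
    rw [Finset.sum_congr rfl fun s hs => hconst s s₀
      (by rw [hTdef, Finset.mem_filter, Finset.mem_powersetCard_univ] at hs
          rw [hs.1, hs₀])]
    simp [mul_comm, hpdef]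
  -- final arithmetic
  have hp0 : p ≠ 0 := by
    intro h
    rw [hScount, h, mul_zero] at hpos
    exact lt_irrefl _ hpos
  have hpt : p ≠ ⊤ := measure_ne_top ℙ _
  have hC0 : (N.choose i : ℝ) ≠ 0 := by
    exact_mod_cast (Nat.choose_pos hi).ne'
  rw [ProbabilityTheory.cond_apply hSmeas, hSEcount, hScount]
  rw [ENNReal.toReal_mul, ENNReal.toReal_inv, ENNReal.toReal_mul, ENNReal.toReal_mul]
  rw [ENNReal.toReal_natCast, ENNReal.toReal_natCast]
  have hpr0 : p.toReal ≠ 0 := ENNReal.toReal_ne_zero.mpr ⟨hp0, hpt⟩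
  have hTreal : (T.card : ℝ) = if α ≤ i then ((N - k).choose (i - α) : ℝ) else 0 := by
    rw [hTcard]; split <;> simp
  rw [hTreal]
  field_simp
end

section
/- Let N, k, i, α ∈ ℕ with α ≤ k < i and i + (k − α) ≤ N. Then, as real numbers, (C(N − k, i − α) / C(N, i)) ÷ ((i/N)^α · ((N − i)/N)^{k−α}) = (i! / ((i − α)! · i^α)) · ∏_{j=1}^{k−α−1} (1 − j/(N − i)) · (N^k / (N · (N−1) ⋯ (N − k + 1))), where the product over j is empty (equal to 1) when k − α ≤ 1. -/
lemma prod_aux (M b : ℕ) (hb : b + 1 ≤ M) :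
    ∏ j ∈ Finset.Icc 1 b, (1 - (j : ℝ) / M) =
      (M.descFactorial (b+1) : ℝ) / (M : ℝ) ^ (b+1) := by
  have hM0 : (M : ℝ) ≠ 0 := by
    have : 0 < M := by omega
    positivity
  have hcast : (M.descFactorial (b+1) : ℝ) = ∏ j ∈ Finset.range (b+1), ((M : ℝ) - j) := by
    rw [Nat.descFactorial_eq_prod_range, Nat.cast_prod]
    refine Finset.prod_congr rfl fun j hj => ?_
    have : j ≤ M := le_of_lt (lt_of_lt_of_le (Finset.mem_range.mp hj) hb)
    push_cast [Nat.cast_sub this]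
    ring
  rw [hcast, Finset.prod_range_succ', ← Finset.Ico_add_one_right_eq_Icc, Finset.prod_Ico_eq_prod_range]
  have : ∀ j ∈ Finset.range (b + 1 - 1), (1 - ((1 + j : ℕ) : ℝ) / M) = ((M : ℝ) - ((j:ℕ) + 1)) / M := by
    intro j hj
    push_cast
    field_simp
    ring
  rw [Finset.prod_congr rfl this, Finset.prod_div_distrib]
  simp only [Finset.prod_const, Finset.card_range, Nat.cast_zero, sub_zero, Nat.add_sub_cancel]
  field_simp
  push_cast
  ring

/-- The exact expression for the ratio `a_i / b_i`:
`(C(N-k, i-α)/C(N,i)) ÷ ((i/N)^α ((N-i)/N)^(k-α))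
  = (i!/((i-α)! i^α)) · ∏_{j=1}^{k-α-1} (1 - j/(N-i)) · (N^k / (N(N-1)⋯(N-k+1)))`. -/
theorem ratio_eq (N k i α : ℕ) (h1 : α ≤ k) (h2 : k < i) (h3 : i + (k - α) ≤ N) :
    (((N - k).choose (i - α) : ℝ) / (N.choose i : ℝ)) /
        (((i : ℝ) / N) ^ α * (((N : ℝ) - i) / N) ^ (k - α)) =
      ((i.factorial : ℝ) / (((i - α).factorial : ℝ) * (i : ℝ) ^ α)) *
        (∏ j ∈ Finset.Icc 1 (k - α - 1), (1 - (j : ℝ) / ((N : ℝ) - i))) *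
        ((N : ℝ) ^ k / (N.descFactorial k : ℝ)) := by
  have hiN : i ≤ N := le_trans (Nat.le_add_right _ _) h3
  have hβNi : k - α ≤ N - i := by omega
  have hia : i - α ≤ N - k := by omega
  have hsub : N - k - (i - α) = N - i - (k - α) := by omega
  have hkN : k ≤ N := by omega
  have hi0 : (i : ℝ) ≠ 0 := by
    have : 0 < i := by omega
    positivity
  have hN0 : (N : ℝ) ≠ 0 := by
    have : 0 < N := by omega
    positivity
  have hNi : (N : ℝ) - i = ((N - i : ℕ) : ℝ) := by
    rw [Nat.cast_sub hiN]
  have hchoose1 : (((N - k).choose (i - α)) : ℝ) =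
      ((N - k).factorial : ℝ) / (((i - α).factorial : ℝ) * ((N - i - (k - α)).factorial : ℝ)) := by
    rw [Nat.cast_choose ℝ hia, hsub]
  have hchoose2 : ((N.choose i) : ℝ) = (N.factorial : ℝ) / ((i.factorial : ℝ) * ((N - i).factorial : ℝ)) :=
    Nat.cast_choose ℝ hiN
  have hdesc : (N.descFactorial k : ℝ) = (N.factorial : ℝ) / ((N - k).factorial : ℝ) := by
    rw [eq_div_iff (by positivity)]
    rw [mul_comm]
    exact_mod_cast congrArg (Nat.cast : ℕ → ℝ) (Nat.factorial_mul_descFactorial hkN)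
  have hfac : ((N - i).factorial : ℝ) =
      ((N - i - (k - α)).factorial : ℝ) * ((N - i).descFactorial (k - α) : ℝ) := by
    exact_mod_cast (congrArg (Nat.cast : ℕ → ℝ) (Nat.factorial_mul_descFactorial hβNi)).symm
  have hP : ∏ j ∈ Finset.Icc 1 (k - α - 1), (1 - (j : ℝ) / ((N : ℝ) - i)) =
      ((N - i).descFactorial (k - α) : ℝ) / ((N : ℝ) - i) ^ (k - α) := by
    rw [hNi]
    rcases Nat.eq_zero_or_pos (k - α) with h | h
    · simp [h]
    · obtain ⟨b, hb⟩ : ∃ b, k - α = b + 1 := ⟨k - α - 1, by omega⟩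
      rw [hb]
      exact prod_aux (N - i) b (by omega)
  have hD0 : ((N - i).descFactorial (k - α) : ℝ) ≠ 0 := by
    rw [Nat.cast_ne_zero]
    intro h
    rw [Nat.descFactorial_eq_zero_iff_lt] at h
    omega
  have hMpow : ((N : ℝ) - i) ^ (k - α) ≠ 0 := by
    rcases Nat.eq_zero_or_pos (k - α) with h | h
    · simp [h]
    · have : 0 < N - i := by omega
      rw [hNi]
      positivity
  have hf1 : ((N - k).factorial : ℝ) ≠ 0 := by positivity
  have hf2 : ((i - α).factorial : ℝ) ≠ 0 := by positivity
  have hf3 : ((N - i - (k - α)).factorial : ℝ) ≠ 0 := by positivity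
  have hf4 : (i.factorial : ℝ) ≠ 0 := by positivity
  have hf5 : (N.factorial : ℝ) ≠ 0 := by positivity
  rw [hfac] at hchoose2
  rw [hchoose1, hchoose2, hdesc, hP]
  rw [div_pow, div_pow]
  have hpow : (N : ℝ) ^ k = (N : ℝ) ^ α * (N : ℝ) ^ (k - α) := by
    rw [← pow_add, Nat.add_sub_cancel' h1]
  field_simp
  rw [hpow]
end

section
/- Let N, k, i, α ∈ ℕ with α ≤ k < i and i + (k − α) ≤ N. Then, as real numbers, (C(N − k, i − α) / C(N, i)) ÷ ((i/N)^α · ((N − i)/N)^{k−α}) ≤ N^k / (N · (N−1) ⋯ (N − k + 1)). -/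
/-- The bound on the ratio `a_i / b_i`:
`(C(N-k, i-α)/C(N,i)) ÷ ((i/N)^α ((N-i)/N)^(k-α)) ≤ N^k / (N(N-1)⋯(N-k+1))`. -/
theorem ratio_le (N k i α : ℕ) (h1 : α ≤ k) (h2 : k < i) (h3 : i + (k - α) ≤ N) :
    (((N - k).choose (i - α) : ℝ) / (N.choose i : ℝ)) /
        (((i : ℝ) / N) ^ α * (((N : ℝ) - i) / N) ^ (k - α)) ≤
      (N : ℝ) ^ k / (N.descFactorial k : ℝ) := by
  set β := k - α with hβdef
  have hiN : i ≤ N := by omega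
  have hkN : k ≤ N := by omega
  have hαi : α ≤ i := by omega
  have hsub : i - α ≤ N - k := by omega
  have hβN : β ≤ N - i := by omega
  have hNpos : (0:ℝ) < N := by exact_mod_cast show 0 < N by omega
  have hipos : (0:ℝ) < i := by exact_mod_cast show 0 < i by omega
  have hcastNi : ((N : ℝ) - i) = ((N - i : ℕ) : ℝ) := by
    push_cast [hiN]; ring
  set C : ℕ := N - i with hCdef
  set A : ℝ := (i.descFactorial α : ℝ) with hA
  set B : ℝ := (C.descFactorial β : ℝ) with hB
  set D : ℝ := (N.descFactorial k : ℝ) with hD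
  have hDpos : (0:ℝ) < D := by
    rw [hD]
    exact_mod_cast Nat.pos_of_ne_zero (fun h => by
      have := Nat.descFactorial_eq_zero_iff_lt.mp h; omega)
  -- key identity
  have key : ((N - k).choose (i - α) : ℝ) / (N.choose i : ℝ) = (A * B) / D := by
    have e1 : ((Nat.factorial (i - α) : ℝ)) * A = (Nat.factorial i : ℝ) := by
      rw [hA]; exact_mod_cast congrArg (Nat.cast (R := ℝ)) (Nat.factorial_mul_descFactorial hαi)
    have e2 : ((Nat.factorial (C - β) : ℝ)) * B = (Nat.factorial C : ℝ) := by
      rw [hB]; exact_mod_cast congrArg (Nat.cast (R := ℝ)) (Nat.factorial_mul_descFactorial hβN)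
    have e3 : ((Nat.factorial (N - k) : ℝ)) * D = (Nat.factorial N : ℝ) := by
      rw [hD]; exact_mod_cast congrArg (Nat.cast (R := ℝ)) (Nat.factorial_mul_descFactorial hkN)
    have e4 : N - k - (i - α) = C - β := by omega
    have e5 : N - i = C := rfl
    rw [Nat.cast_choose ℝ hsub, Nat.cast_choose ℝ hiN, e4, e5, ← e1, ← e2, ← e3]
    have p1 : (0:ℝ) < ((Nat.factorial (i - α)) : ℝ) := by exact_mod_cast (i - α).factorial_pos
    have p2 : (0:ℝ) < ((Nat.factorial (C - β)) : ℝ) := by exact_mod_cast (C - β).factorial_pos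
    have p3 : (0:ℝ) < ((Nat.factorial (N - k)) : ℝ) := by exact_mod_cast (N - k).factorial_pos
    field_simp
  rw [key, hcastNi]
  have hCpow : (0:ℝ) < (C : ℝ) ^ β := by
    rcases Nat.eq_zero_or_pos β with h | h
    · simp [h]
    · have : 0 < C := by omega
      positivity
  have hden : ((i : ℝ) / N) ^ α * ((C : ℝ) / N) ^ β = ((i:ℝ) ^ α * (C:ℝ) ^ β) / (N:ℝ) ^ k := by
    rw [div_pow, div_pow, div_mul_div_comm, ← pow_add]
    congr 2
    omega
  rw [hden]
  have hAB : A * B ≤ (i:ℝ) ^ α * (C:ℝ) ^ β := by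
    apply mul_le_mul
    · rw [hA]; exact_mod_cast Nat.descFactorial_le_pow i α
    · rw [hB]; exact_mod_cast Nat.descFactorial_le_pow C β
    · rw [hB]; positivity
    · positivity
  have heq : (A * B / D) / (((i:ℝ) ^ α * (C:ℝ) ^ β) / (N:ℝ) ^ k)
      = (A * B) / ((i:ℝ) ^ α * (C:ℝ) ^ β) * ((N:ℝ) ^ k / D) := by
    field_simp
  rw [heq]
  have hfrac : (A * B) / ((i:ℝ) ^ α * (C:ℝ) ^ β) ≤ 1 := by
    rw [div_le_one (by positivity)]
    exact hAB
  have hnn : (0:ℝ) ≤ (N:ℝ) ^ k / D := by positivity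
  calc (A * B) / ((i:ℝ) ^ α * (C:ℝ) ^ β) * ((N:ℝ) ^ k / D)
      ≤ 1 * ((N:ℝ) ^ k / D) := by
        apply mul_le_mul_of_nonneg_right hfrac hnn
    _ = (N:ℝ) ^ k / D := one_mul _
end

section
/- Fix k, α ∈ ℕ with α ≤ k. For every real ε > 0 there exists m ∈ ℕ such that for all N, i ∈ ℕ with m ≤ i, i ≤ N, and (N − i)² ≥ N, the real number (C(N − k, i − α) / C(N, i)) ÷ ((i/N)^α · ((N − i)/N)^{k−α}) lies in the open interval (1 − ε, 1 + ε). -/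
set_option maxHeartbeats 1000000
open Finset

open Nat in
lemma rto_aux_nat (k α N i : ℕ) (hαk : α ≤ k) (hα : α ≤ i) (hiN : i ≤ N)
    (hk : k - α ≤ N - i) :
    (N - k).choose (i - α) * N.descFactorial k =
      N.choose i * (i.descFactorial α * (N - i).descFactorial (k - α)) := by
  have hkN : k ≤ N := by omega
  have hc : 0 < (i - α)! * ((N - i) - (k - α))! := Nat.mul_pos (Nat.factorial_pos _) (Nat.factorial_pos _)
  apply Nat.eq_of_mul_eq_mul_right hc
  have e1 : (N - k).choose (i - α) * (i - α)! * ((N - k) - (i - α))! = (N - k)! :=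
    Nat.choose_mul_factorial_mul_factorial (by omega)
  have e6 : (N - k) - (i - α) = (N - i) - (k - α) := by omega
  rw [e6] at e1
  have e2 : (i - α)! * i.descFactorial α = i ! := Nat.factorial_mul_descFactorial hα
  have e3 : ((N - i) - (k - α))! * (N - i).descFactorial (k - α) = (N - i)! :=
    Nat.factorial_mul_descFactorial hk
  have e4 : (N - k)! * N.descFactorial k = N ! := Nat.factorial_mul_descFactorial hkN
  have e5 : N.choose i * i ! * (N - i)! = N ! := Nat.choose_mul_factorial_mul_factorial hiN
  calc (N - k).choose (i - α) * N.descFactorial k * ((i - α)! * ((N - i) - (k - α))!)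
      = ((N - k).choose (i - α) * (i - α)! * ((N - i) - (k - α))!) * N.descFactorial k := by ring
    _ = (N - k)! * N.descFactorial k := by rw [e1]
    _ = N ! := e4
    _ = N.choose i * i ! * (N - i)! := e5.symm
    _ = N.choose i * ((i - α)! * i.descFactorial α) * (((N - i) - (k - α))! * (N - i).descFactorial (k - α)) := by rw [e2, e3]
    _ = N.choose i * (i.descFactorial α * (N - i).descFactorial (k - α)) * ((i - α)! * ((N - i) - (k - α))!) := by ring

lemma rto_cast_desc (n j : ℕ) (h : j ≤ n) :
    (n.descFactorial j : ℝ) = ∏ t ∈ range j, ((n : ℝ) - t) := by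
  rw [Nat.descFactorial_eq_prod_range, Nat.cast_prod]
  refine Finset.prod_congr rfl fun t ht => ?_
  have : t ≤ n := le_trans (le_of_lt (mem_range.mp ht)) h
  exact Nat.cast_sub this

lemma rto_prod_le (x : ℝ) (j k : ℕ) (hj : j ≤ k) (hx : (k : ℝ) ≤ x) :
    ∏ t ∈ range j, (x - t) ≤ x ^ j := by
  have h0 : ∀ t ∈ range j, (0:ℝ) ≤ x - t ∧ x - t ≤ x := by
    intro t ht
    have ht' : (t : ℝ) < j := by exact_mod_cast mem_range.mp ht
    have hjk : (j : ℝ) ≤ k := by exact_mod_cast hj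
    have h2 : (0:ℝ) ≤ t := Nat.cast_nonneg t
    constructor <;> linarith
  calc ∏ t ∈ range j, (x - t) ≤ ∏ _t ∈ range j, x :=
        Finset.prod_le_prod (fun t ht => (h0 t ht).1) (fun t ht => (h0 t ht).2)
    _ = x ^ j := by rw [prod_const, card_range]

lemma rto_le_prod (x : ℝ) (j k : ℕ) (hj : j ≤ k) (hx : (k : ℝ) ≤ x) :
    (x - k) ^ j ≤ ∏ t ∈ range j, (x - t) := by
  have : ((x - k) ^ j : ℝ) = ∏ _t ∈ range j, (x - k) := by rw [prod_const, card_range]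
  rw [this]
  refine Finset.prod_le_prod (fun t _ => by linarith) (fun t ht => ?_)
  have ht' : (t : ℝ) < j := by exact_mod_cast mem_range.mp ht
  have hjk : (j : ℝ) ≤ k := by exact_mod_cast hj
  linarith

lemma rto_prod_pos (x : ℝ) (j k : ℕ) (hj : j ≤ k) (hx : (k : ℝ) < x) :
    0 < ∏ t ∈ range j, (x - t) :=
  lt_of_lt_of_le (pow_pos (by linarith) j) (rto_le_prod x j k hj hx.le)

/-- For fixed `α ≤ k`, the ratio `(C(N-k, i-α)/C(N,i)) ÷ ((i/N)^α ((N-i)/N)^(k-α))` is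
within `ε` of `1`, uniformly over all `N, i` with `i ≤ N` and `(N - i)² ≥ N`
(i.e. `i ≤ N - √N`), provided `i` is sufficiently large. -/
theorem ratio_tendsto_one (k α : ℕ) (hαk : α ≤ k) :
    ∀ ε : ℝ, 0 < ε → ∃ m : ℕ, ∀ N i : ℕ, m ≤ i → i ≤ N → N ≤ (N - i) ^ 2 →
      1 - ε < (((N - k).choose (i - α) : ℝ) / (N.choose i : ℝ)) /
            (((i : ℝ) / N) ^ α * (((N : ℝ) - i) / N) ^ (k - α)) ∧
        (((N - k).choose (i - α) : ℝ) / (N.choose i : ℝ)) /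
            (((i : ℝ) / N) ^ α * (((N : ℝ) - i) / N) ^ (k - α)) < 1 + ε := by
  intro ε hε
  have hK0 : (0:ℝ) ≤ (k:ℝ) := Nat.cast_nonneg k
  obtain ⟨δ, hδ0, hδ1, hKδε, hKδ0, hKδup⟩ :
      ∃ δ : ℝ, 0 < δ ∧ δ < 1 ∧ (k:ℝ) * δ < ε ∧ 0 < 1 - (k:ℝ) * δ ∧
        1 / (1 - (k:ℝ) * δ) < 1 + ε := by
    have hc : (0:ℝ) < 2 * ((k:ℝ) + 1) * (1 + ε) := by positivity
    obtain ⟨e, he0, hec⟩ : ∃ e : ℝ, 0 < e ∧ e * (2 * ((k:ℝ) + 1) * (1 + ε)) = ε :=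
      ⟨ε / (2 * ((k:ℝ) + 1) * (1 + ε)), by positivity, div_mul_cancel₀ ε hc.ne'⟩
    have hkec : (k:ℝ) * e * (2 * ((k:ℝ) + 1) * (1 + ε)) = (k:ℝ) * ε := by
      rw [mul_assoc, hec]
    have hke1 : (k:ℝ) * e < 1 := by
      nlinarith [hkec, hc, mul_nonneg hK0 hε.le, hε, hK0]
    refine ⟨e, he0, ?_, ?_, ?_, ?_⟩
    · nlinarith [hec, hc, mul_nonneg hK0 hε.le, hε, hK0]
    · have hck : (k:ℝ) < 2 * ((k:ℝ) + 1) * (1 + ε) := by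
        nlinarith [mul_nonneg hK0 hε.le]
      nlinarith [mul_lt_mul_of_pos_left hck he0, hec]
    · linarith [hke1]
    · rw [div_lt_iff₀ (by linarith [hke1] : (0:ℝ) < 1 - (k:ℝ) * e)]
      have h4 : (1 + ε) * ((k:ℝ) * e) * (2 * ((k:ℝ) + 1) * (1 + ε)) = (1 + ε) * ((k:ℝ) * ε) := by
        rw [mul_assoc, hkec]
      nlinarith [h4, hc, hε, mul_nonneg hK0 hε.le, mul_pos hε hε,
        mul_nonneg (mul_nonneg hK0 hε.le) hε.le]
  refine ⟨⌈((k:ℝ) / δ) ^ 2⌉₊ + ⌈(k:ℝ) / δ⌉₊ + k * k + 1, ?_⟩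
  intro N i hmi hiN hNi
  set m := ⌈((k:ℝ) / δ) ^ 2⌉₊ + ⌈(k:ℝ) / δ⌉₊ + k * k + 1 with hmdef
  set d := N - i with hddef
  have hdd : N ≤ d * d := by rw [← pow_two]; exact hNi
  have hkk : k ≤ k * k := by
    rcases Nat.eq_zero_or_pos k with h | h
    · simp [h]
    · exact Nat.le_mul_of_pos_left k h
  have hik : k < i := by omega
  have hkd : k < d := by
    by_contra h
    push_neg at h
    have := Nat.mul_le_mul h h
    omega
  have hαi : α ≤ i := le_trans hαk hik.le
  have hkN : k ≤ N := le_trans hik.le hiN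
  have hdN : k - α ≤ N - i := by omega
  -- real positivity facts
  have hi0 : (0:ℝ) < i := by
    have : 0 < i := by omega
    exact_mod_cast this
  have hN0 : (0:ℝ) < N := by
    have : 0 < N := by omega
    exact_mod_cast this
  have hdcast : ((d : ℕ) : ℝ) = (N:ℝ) - i := by
    rw [hddef]; exact Nat.cast_sub hiN
  have hD0 : (0:ℝ) < (N:ℝ) - i := by
    rw [← hdcast]
    have : 0 < d := by omega
    exact_mod_cast this
  have hKi : (k:ℝ) < (i:ℝ) := by exact_mod_cast hik
  have hKD : (k:ℝ) < (N:ℝ) - i := by rw [← hdcast]; exact_mod_cast hkd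
  have hKN : (k:ℝ) < (N:ℝ) := lt_of_lt_of_le hKi (by exact_mod_cast hiN)
  -- bounds (k:ℝ) ≤ δ * x
  have hmi' : (m : ℝ) ≤ (i : ℝ) := by exact_mod_cast hmi
  have hmN' : (m : ℝ) ≤ (N : ℝ) := by exact_mod_cast le_trans hmi hiN
  have hceil1 : (⌈(k:ℝ) / δ⌉₊ : ℝ) ≤ (m : ℝ) := by exact_mod_cast (by omega : ⌈(k:ℝ) / δ⌉₊ ≤ m)
  have hceil2 : (⌈((k:ℝ) / δ) ^ 2⌉₊ : ℝ) ≤ (m : ℝ) := by exact_mod_cast (by omega : ⌈((k:ℝ) / δ) ^ 2⌉₊ ≤ m)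
  have hCi : (k:ℝ) ≤ δ * i := by
    have h1 : (k:ℝ) / δ ≤ (i : ℝ) := le_trans (Nat.le_ceil _) (le_trans hceil1 hmi')
    rw [div_le_iff₀ hδ0] at h1
    linarith [h1]
  have hCN : (k:ℝ) ≤ δ * N := by
    have h1 : (k:ℝ) / δ ≤ (N : ℝ) := le_trans (Nat.le_ceil _) (le_trans hceil1 hmN')
    rw [div_le_iff₀ hδ0] at h1
    linarith [h1]
  have hCd : (k:ℝ) ≤ δ * ((N:ℝ) - i) := by
    have h2 : ((k:ℝ) / δ) ^ 2 ≤ ((N:ℝ) - i) ^ 2 := by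
      calc ((k:ℝ) / δ) ^ 2 ≤ (⌈((k:ℝ) / δ) ^ 2⌉₊ : ℝ) := Nat.le_ceil _
        _ ≤ (m : ℝ) := hceil2
        _ ≤ (N : ℝ) := hmN'
        _ ≤ ((d : ℕ) : ℝ) ^ 2 := by exact_mod_cast hNi
        _ = ((N:ℝ) - i) ^ 2 := by rw [hdcast]
    have h3 : (k:ℝ) / δ ≤ (N:ℝ) - i := by
      nlinarith [div_nonneg hK0 hδ0.le, hD0]
    rw [div_le_iff₀ hδ0] at h3
    linarith [h3]
  -- the products
  set P1 : ℝ := ∏ t ∈ range α, ((i:ℝ) - t) with hP1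
  set P2 : ℝ := ∏ t ∈ range (k - α), (((N:ℝ) - i) - t) with hP2
  set P3 : ℝ := ∏ t ∈ range k, ((N:ℝ) - t) with hP3
  have hP1pos : 0 < P1 := rto_prod_pos _ _ k hαk hKi
  have hP2pos : 0 < P2 := rto_prod_pos _ _ k (Nat.sub_le k α) hKD
  have hP3pos : 0 < P3 := rto_prod_pos _ _ k le_rfl hKN
  have hchoosepos : (0:ℝ) < (N.choose i : ℝ) := by exact_mod_cast Nat.choose_pos hiN
  -- identity
  have hc1 : (i.descFactorial α : ℝ) = P1 := rto_cast_desc i α hαi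
  have hc2 : ((N - i).descFactorial (k - α) : ℝ) = P2 := by
    rw [rto_cast_desc (N - i) (k - α) hdN, ← hddef]
    rw [hP2, hdcast]
  have hc3 : (N.descFactorial k : ℝ) = P3 := rto_cast_desc N k hkN
  have hid : (((N - k).choose (i - α) : ℝ)) * P3 = ((N.choose i : ℝ)) * (P1 * P2) := by
    have h := rto_aux_nat k α N i hαk hαi hiN hdN
    have h' := congrArg (Nat.cast : ℕ → ℝ) h
    push_cast at h'
    rw [hc1, hc2, hc3] at h'
    exact h'
  have hratio : (((N - k).choose (i - α) : ℝ)) / (N.choose i : ℝ) = (P1 * P2) / P3 := by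
    rw [div_eq_div_iff hchoosepos.ne' hP3pos.ne']
    linear_combination hid
  have hden : ((i : ℝ) / N) ^ α * (((N : ℝ) - i) / N) ^ (k - α) =
      ((i:ℝ)^α * ((N:ℝ) - i)^(k - α)) / (N:ℝ)^k := by
    rw [div_pow, div_pow, div_mul_div_comm, ← pow_add,
      (by omega : α + (k - α) = k)]
  have hE : (((N - k).choose (i - α) : ℝ) / (N.choose i : ℝ)) /
      (((i : ℝ) / N) ^ α * (((N : ℝ) - i) / N) ^ (k - α)) =
      P1 * P2 * (N:ℝ)^k / (P3 * ((i:ℝ)^α * ((N:ℝ) - i)^(k - α))) := by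
    rw [hratio, hden, div_div_div_eq]
    try ring
  -- lower bound
  have hl1 : ((i:ℝ) - k) ^ α ≤ P1 := rto_le_prod _ _ k hαk hKi.le
  have hl2 : (((N:ℝ) - i) - k) ^ (k - α) ≤ P2 := rto_le_prod _ _ k (Nat.sub_le k α) hKD.le
  have hl3 : P3 ≤ (N:ℝ)^k := rto_prod_le _ _ k le_rfl hKN.le
  have hu1 : P1 ≤ (i:ℝ)^α := rto_prod_le _ _ k hαk hKi.le
  have hu2 : P2 ≤ ((N:ℝ) - i)^(k - α) := rto_prod_le _ _ k (Nat.sub_le k α) hKD.le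
  have hu3 : ((N:ℝ) - k)^k ≤ P3 := rto_le_prod _ _ k le_rfl hKN.le
  have hNk0 : (0:ℝ) < (N:ℝ) - k := by linarith [hKN]
  have hlow : ((i:ℝ) - k) ^ α * (((N:ℝ) - i) - k) ^ (k - α) * (N:ℝ)^k /
      ((N:ℝ)^k * ((i:ℝ)^α * ((N:ℝ) - i)^(k - α))) ≤
      P1 * P2 * (N:ℝ)^k / (P3 * ((i:ℝ)^α * ((N:ℝ) - i)^(k - α))) := by
    gcongr <;>
      first
        | exact hl1
        | exact hl2
        | exact hl3
        | positivity
        | (apply pow_nonneg; linarith [hKi, hKD, hKN])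
        | (apply pow_pos; linarith [hKi, hKD, hKN])
        | linarith [hKi, hKD, hKN, hi0, hD0, hN0, hNk0]
  have hlow2 : (1 - δ)^k ≤ ((i:ℝ) - k) ^ α * (((N:ℝ) - i) - k) ^ (k - α) * (N:ℝ)^k /
      ((N:ℝ)^k * ((i:ℝ)^α * ((N:ℝ) - i)^(k - α))) := by
    have e : ((i:ℝ) - k) ^ α * (((N:ℝ) - i) - k) ^ (k - α) * (N:ℝ)^k /
        ((N:ℝ)^k * ((i:ℝ)^α * ((N:ℝ) - i)^(k - α))) =
        (((i:ℝ) - k)/i)^α * ((((N:ℝ) - i) - k)/((N:ℝ) - i))^(k - α) := by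
      rw [div_pow, div_pow]
      field_simp
    rw [e]
    have ek : ((1:ℝ) - δ)^k = (1 - δ)^α * (1 - δ)^(k - α) := by
      rw [← pow_add]; congr 1; omega
    rw [ek]
    have h0 : (0:ℝ) ≤ 1 - δ := by linarith
    have h1 : (1 - δ:ℝ) ≤ ((i:ℝ) - k)/i := by
      rw [le_div_iff₀ hi0]; linarith [hCi]
    have h2 : (1 - δ:ℝ) ≤ (((N:ℝ) - i) - k)/((N:ℝ) - i) := by
      rw [le_div_iff₀ hD0]; linarith [hCd]
    exact mul_le_mul (pow_le_pow_left₀ h0 h1 α) (pow_le_pow_left₀ h0 h2 _)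
      (pow_nonneg h0 _) (pow_nonneg (div_nonneg (by linarith [hKi]) hi0.le) _)
  have hlow3 : 1 - (k:ℝ) * δ ≤ (1 - δ)^k := by
    have h := one_add_mul_le_pow (show (-2:ℝ) ≤ -δ by linarith) k
    have e1 : (1 + -δ : ℝ) = 1 - δ := by ring
    rw [e1] at h
    have e2 : (1 + (k:ℝ) * -δ) = 1 - (k:ℝ) * δ := by ring
    rw [e2] at h
    exact h
  -- upper bound
  have hup : P1 * P2 * (N:ℝ)^k / (P3 * ((i:ℝ)^α * ((N:ℝ) - i)^(k - α))) ≤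
      (i:ℝ)^α * ((N:ℝ) - i)^(k - α) * (N:ℝ)^k /
      (((N:ℝ) - k)^k * ((i:ℝ)^α * ((N:ℝ) - i)^(k - α))) := by
    gcongr <;>
      first
        | exact hu1
        | exact hu2
        | exact hu3
        | positivity
        | (apply pow_nonneg; linarith [hKi, hKD, hKN])
        | (apply pow_pos; linarith [hKi, hKD, hKN])
        | linarith [hKi, hKD, hKN, hi0, hD0, hN0, hNk0]
  have hup2 : (i:ℝ)^α * ((N:ℝ) - i)^(k - α) * (N:ℝ)^k /
      (((N:ℝ) - k)^k * ((i:ℝ)^α * ((N:ℝ) - i)^(k - α))) = ((N:ℝ)/((N:ℝ) - k))^k := by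
    rw [div_pow]
    field_simp
  have hup3 : (N:ℝ)/((N:ℝ) - k) ≤ 1/(1 - δ) := by
    rw [div_le_div_iff₀ hNk0 (by linarith : (0:ℝ) < 1 - δ)]
    linarith [hCN]
  have hup4 : ((N:ℝ)/((N:ℝ) - k))^k ≤ (1/(1 - δ))^k := by
    apply pow_le_pow_left₀ (by positivity) hup3
  have hup5 : ((1:ℝ)/(1 - δ))^k ≤ 1 / (1 - (k:ℝ) * δ) := by
    rw [div_pow, one_pow]
    apply one_div_le_one_div_of_le hKδ0 hlow3
  constructor
  · calc (1:ℝ) - ε < 1 - (k:ℝ) * δ := by linarith [hKδε]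
      _ ≤ (1 - δ)^k := hlow3
      _ ≤ _ := by rw [hE]; exact le_trans hlow2 hlow
  · calc (((N - k).choose (i - α) : ℝ) / (N.choose i : ℝ)) /
        (((i : ℝ) / N) ^ α * (((N : ℝ) - i) / N) ^ (k - α))
        ≤ ((N:ℝ)/((N:ℝ) - k))^k := by rw [hE, ← hup2]; exact hup
      _ ≤ (1/(1 - δ))^k := hup4
      _ ≤ 1 / (1 - (k:ℝ) * δ) := hup5
      _ < 1 + ε := hKδup
end

section
/- Let X₁, X₂, … be an exchangeable sequence of Bernoulli random variables on a probability space (Ω, ℱ, ℙ), let k ∈ ℕ, and let e₁, …, e_k ∈ {0,1} with α = e₁ + ⋯ + e_k. For N ≥ k let S_N = X₁ + ⋯ + X_N. Then lim_{N→∞} 𝔼[(S_N/N)^α · (1 − S_N/N)^{k−α}] = ℙ(X₁ = e₁, …, X_k = e_k). -/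
open MeasureTheory

/-- For an exchangeable sequence, the probability of seeing the pattern `e` at `k` distinct
indices `v 0, …, v (k-1)` below `N` equals the probability of seeing it at `0, …, k-1`. -/
lemma aux_exch {Ω : Type*} [MeasurableSpace Ω] (ℙ : Measure Ω) (X : ℕ → Ω → ℕ)
    (hmeas : ∀ n, Measurable (X n)) (hexch : Exchangeable ℙ X)
    {k N : ℕ} (hkN : k ≤ N) (e : Fin k → ℕ) (v : Fin k → ℕ)
    (hv : ∀ j, v j < N) (hvinj : Function.Injective v) :
    ℙ {ω | ∀ j, X (v j) ω = e j} = ℙ {ω | ∀ j : Fin k, X (j : ℕ) ω = e j} := by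
  classical
  set ι : Fin k → Fin N := fun j => ⟨j, lt_of_lt_of_le j.isLt hkN⟩ with hιdef
  set w : Fin k → Fin N := fun j => ⟨v j, hv j⟩ with hwdef
  have hιinj : Function.Injective ι := fun a b h => Fin.ext (by
    simpa [hιdef] using congrArg Fin.val h)
  have hwinj : Function.Injective w := fun a b h => hvinj (by
    simpa [hwdef] using congrArg Fin.val h)
  let eqv : {x : Fin N // x ∈ Set.range ι} ≃ {x : Fin N // x ∈ Set.range w} :=
    (Equiv.ofInjective ι hιinj).symm.trans (Equiv.ofInjective w hwinj)
  let σ : Equiv.Perm (Fin N) := eqv.extendSubtype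
  have hσ : ∀ j : Fin k, σ (ι j) = w j := by
    intro j
    have hmem : (ι j) ∈ Set.range ι := ⟨j, rfl⟩
    have h1 : σ (ι j) = eqv ⟨ι j, hmem⟩ :=
      Equiv.extendSubtype_apply_of_mem eqv (ι j) hmem
    have h2 : (⟨ι j, hmem⟩ : {x : Fin N // x ∈ Set.range ι}) = Equiv.ofInjective ι hιinj j :=
      rfl
    rw [h1, h2]
    simp [eqv]
  set B : Set (Fin N → ℕ) := {y | ∀ j : Fin k, y (ι j) = e j} with hBdef
  have hB : MeasurableSet B := by
    have : B = ⋂ j : Fin k, (fun y : Fin N → ℕ => y (ι j)) ⁻¹' {e j} := by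
      ext y; simp [hBdef]
    rw [this]
    exact MeasurableSet.iInter fun j => (measurable_pi_apply _) (measurableSet_singleton _)
  have hT1 : Measurable (fun ω (j : Fin N) => X (σ j) ω) :=
    measurable_pi_lambda _ fun j => hmeas _
  have hT2 : Measurable (fun ω (j : Fin N) => X (j : ℕ) ω) :=
    measurable_pi_lambda _ fun j => hmeas _
  have key := congrArg (fun μ : Measure (Fin N → ℕ) => μ B) (hexch N σ)
  rw [Measure.map_apply hT1 hB, Measure.map_apply hT2 hB] at key
  have hp1 : (fun ω (j : Fin N) => X (σ j) ω) ⁻¹' B = {ω | ∀ j, X (v j) ω = e j} := by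
    ext ω
    show (∀ j : Fin k, X (σ (ι j) : ℕ) ω = e j) ↔ _
    exact forall_congr' fun j => by rw [hσ j]
  have hp2 : (fun ω (j : Fin N) => X (j : ℕ) ω) ⁻¹' B = {ω | ∀ j : Fin k, X (j : ℕ) ω = e j} := by
    ext ω
    simp only [Set.mem_preimage, hBdef, Set.mem_setOf_eq]
    exact Iff.rfl
  rw [hp1, hp2] at key
  exact key

/-- The number of injective functions `Fin k → range N` is `N.descFactorial k`. -/
lemma aux_card (k N : ℕ) :
    ((Fintype.piFinset fun _ : Fin k => Finset.range N).filter
      (fun v => Function.Injective v)).card = N.descFactorial k := by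
  classical
  have : (Finset.univ : Finset (Fin k ↪ Fin N)).card =
      ((Fintype.piFinset fun _ : Fin k => Finset.range N).filter
      (fun v => Function.Injective v)).card := by
    apply Finset.card_bij (i := fun (f : Fin k ↪ Fin N) _ => fun j => (f j : ℕ))
    · intro f _
      rw [Finset.mem_filter]
      refine ⟨?_, ?_⟩
      · rw [Fintype.mem_piFinset]; intro j; exact Finset.mem_range.mpr (f j).isLt
      · intro a b hab
        exact f.injective (Fin.ext hab)
    · intro f _ g _ hfg
      ext j
      exact congrFun hfg j
    · intro v hv
      have h1 := (Finset.mem_filter.mp hv).1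
      have h2 : Function.Injective v := (Finset.mem_filter.mp hv).2
      refine ⟨⟨fun j => ⟨v j, Finset.mem_range.mp (Fintype.mem_piFinset.mp h1 j)⟩,
        fun a b hab => h2 (by simpa using congrArg Fin.val hab)⟩, Finset.mem_univ _, rfl⟩
  rw [← this, Finset.card_univ, Fintype.card_embedding_eq, Fintype.card_fin, Fintype.card_fin]

/-- For an exchangeable sequence of Bernoulli random variables, with `α = e₁ + ⋯ + e_k` and
`S_N = X₁ + ⋯ + X_N`, one has
`lim_{N→∞} 𝔼[(S_N/N)^α (1 - S_N/N)^(k-α)] = ℙ(X₁ = e₁, …, X_k = e_k)`. -/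
theorem tendsto_moment_sample_mean {Ω : Type*} [MeasurableSpace Ω] (ℙ : Measure Ω)
    [IsProbabilityMeasure ℙ] (X : ℕ → Ω → ℕ)
    (hmeas : ∀ n, Measurable (X n)) (hBer : ∀ n ω, X n ω = 0 ∨ X n ω = 1)
    (hexch : Exchangeable ℙ X)
    (k : ℕ) (e : Fin k → ℕ) (he : ∀ j, e j = 0 ∨ e j = 1) (α : ℕ) (hα : α = ∑ j, e j) :
    Filter.Tendsto
      (fun N : ℕ => ∫ ω,
        (((∑ j ∈ Finset.range N, X j ω : ℕ) : ℝ) / N) ^ α *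
          (1 - ((∑ j ∈ Finset.range N, X j ω : ℕ) : ℝ) / N) ^ (k - α) ∂ℙ)
      Filter.atTop
      (nhds ((ℙ {ω | ∀ j : Fin k, X (j : ℕ) ω = e j}).toReal)) := by
  classical
  set c : ℝ := (ℙ {ω | ∀ j : Fin k, X (j : ℕ) ω = e j}).toReal with hc
  set P : ℕ → Finset (Fin k → ℕ) := fun N => Fintype.piFinset fun _ : Fin k => Finset.range N
    with hPdef
  set A : (Fin k → ℕ) → Set Ω := fun v => {ω | ∀ j, X (v j) ω = e j} with hAdef
  have hA : ∀ v, MeasurableSet (A v) := by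
    intro v
    have : A v = ⋂ j : Fin k, X (v j) ⁻¹' {e j} := by ext ω; simp [hAdef]
    rw [this]
    exact MeasurableSet.iInter fun j => (hmeas _) (measurableSet_singleton _)
  have htoReal01 : ∀ s : Set Ω, (ℙ s).toReal ≤ 1 ∧ 0 ≤ (ℙ s).toReal := by
    intro s
    constructor
    · have := ENNReal.toReal_mono (measure_ne_top ℙ Set.univ) (measure_mono (Set.subset_univ s))
      simpa using this
    · exact ENNReal.toReal_nonneg
  -- pointwise indicator identity
  have hind : ∀ (v : Fin k → ℕ) (ω : Ω),
      (∏ j, (if e j = 1 then ((X (v j) ω : ℕ) : ℝ) else 1 - ((X (v j) ω : ℕ) : ℝ))) =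
        (A v).indicator (fun _ => (1 : ℝ)) ω := by
    intro v ω
    by_cases h : ω ∈ A v
    · rw [Set.indicator_of_mem h]
      refine Finset.prod_eq_one fun j _ => ?_
      have hj := h j
      rcases he j with h0 | h1
      · rw [hj, h0]; norm_num
      · rw [hj, h1]; norm_num
    · rw [Set.indicator_of_notMem h]
      simp only [hAdef, Set.mem_setOf_eq, not_forall] at h
      obtain ⟨j, hj⟩ := h
      refine Finset.prod_eq_zero (Finset.mem_univ j) ?_
      rcases hBer (v j) ω with hx | hx <;> rcases he j with h0 | h1
      · exact absurd (hx.trans h0.symm) hj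
      · rw [if_pos h1, hx]; norm_num
      · rw [if_neg (by omega), hx]; norm_num
      · exact absurd (hx.trans h1.symm) hj
  have hαk : α ≤ k := by
    rw [hα]
    calc ∑ j, e j ≤ ∑ _j : Fin k, 1 :=
        Finset.sum_le_sum (fun j _ => by rcases he j with h | h <;> omega)
    _ = k := by simp
  -- pointwise expansion
  have hexpand : ∀ N : ℕ, 1 ≤ N → ∀ ω : Ω,
      (((∑ j ∈ Finset.range N, X j ω : ℕ) : ℝ) / N) ^ α *
          (1 - ((∑ j ∈ Finset.range N, X j ω : ℕ) : ℝ) / N) ^ (k - α) =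
      ((N : ℝ) ^ k)⁻¹ * ∑ v ∈ P N,
        ∏ j, (if e j = 1 then ((X (v j) ω : ℕ) : ℝ) else 1 - ((X (v j) ω : ℕ) : ℝ)) := by
    intro N hN ω
    set p : ℝ := ((∑ j ∈ Finset.range N, X j ω : ℕ) : ℝ) / N with hp
    have hNne : (N : ℝ) ≠ 0 := Nat.cast_ne_zero.mpr (by omega)
    have hcard1 : (Finset.univ.filter fun j => e j = 1).card = α := by
      rw [hα, Finset.card_filter]
      refine Finset.sum_congr rfl fun j _ => ?_
      rcases he j with h | h <;> simp [h]
    have hcard0 : (Finset.univ.filter fun j => ¬ e j = 1).card = k - α := by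
      have := Finset.card_filter_add_card_filter_not
        (s := (Finset.univ : Finset (Fin k))) (p := fun j => e j = 1)
      rw [hcard1, Finset.card_univ, Fintype.card_fin] at this
      omega
    have step1 : p ^ α * (1 - p) ^ (k - α) = ∏ j : Fin k, (if e j = 1 then p else 1 - p) := by
      rw [Finset.prod_ite, Finset.prod_const, Finset.prod_const, hcard1, hcard0]
    have step2 : ∀ j : Fin k, (if e j = 1 then p else 1 - p) =
        ∑ i ∈ Finset.range N,
          (if e j = 1 then ((X i ω : ℕ) : ℝ) else 1 - ((X i ω : ℕ) : ℝ)) / N := by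
      intro j
      by_cases h : e j = 1
      · simp only [h, if_true, hp]
        rw [← Finset.sum_div, Nat.cast_sum]
      · simp only [h, if_false, hp]
        rw [← Finset.sum_div, Finset.sum_sub_distrib, Finset.sum_const, Finset.card_range,
          nsmul_eq_mul, mul_one, Nat.cast_sum]
        field_simp
    rw [step1]
    rw [Finset.prod_congr rfl (fun j _ => step2 j), Finset.prod_univ_sum, Finset.mul_sum]
    refine Finset.sum_congr rfl fun v _ => ?_
    rw [Finset.prod_div_distrib, Finset.prod_const, Finset.card_univ, Fintype.card_fin]
    rw [div_eq_inv_mul]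
  -- integral identity
  have hInt : ∀ N : ℕ, 1 ≤ N →
      (∫ ω, (((∑ j ∈ Finset.range N, X j ω : ℕ) : ℝ) / N) ^ α *
          (1 - ((∑ j ∈ Finset.range N, X j ω : ℕ) : ℝ) / N) ^ (k - α) ∂ℙ) =
      ((N : ℝ) ^ k)⁻¹ * ∑ v ∈ P N, (ℙ (A v)).toReal := by
    intro N hN
    have heq : ∀ ω : Ω,
        (((∑ j ∈ Finset.range N, X j ω : ℕ) : ℝ) / N) ^ α *
          (1 - ((∑ j ∈ Finset.range N, X j ω : ℕ) : ℝ) / N) ^ (k - α) =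
        ((N : ℝ) ^ k)⁻¹ * ∑ v ∈ P N, (A v).indicator (fun _ => (1 : ℝ)) ω := by
      intro ω
      rw [hexpand N hN ω]
      congr 1
      exact Finset.sum_congr rfl fun v _ => hind v ω
    rw [integral_congr_ae (Filter.Eventually.of_forall heq)]
    rw [integral_const_mul]
    congr 1
    rw [integral_finset_sum _ (fun v _ => (integrable_const (1 : ℝ)).indicator (hA v))]
    refine Finset.sum_congr rfl fun v _ => ?_
    rw [integral_indicator_const (1 : ℝ) (hA v), smul_eq_mul, mul_one]
    rfl
  -- value of ℙ (A v) for injective v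
  have hval : ∀ N : ℕ, k ≤ N → ∀ v ∈ (P N).filter (fun v => Function.Injective v),
      (ℙ (A v)).toReal = c := by
    intro N hkN v hv
    have h1 := (Finset.mem_filter.mp hv).1
    have h2 : Function.Injective v := (Finset.mem_filter.mp hv).2
    rw [hc, hAdef]
    congr 1
    exact aux_exch ℙ X hmeas hexch hkN e v
      (fun j => Finset.mem_range.mp (Fintype.mem_piFinset.mp h1 j)) h2
  have hcardP : ∀ N : ℕ, (P N).card = N ^ k := by
    intro N
    rw [hPdef]
    simp [Fintype.card_piFinset]
  -- key error bound
  have hkey : ∀ N : ℕ, max k 1 ≤ N →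
      |(∫ ω, (((∑ j ∈ Finset.range N, X j ω : ℕ) : ℝ) / N) ^ α *
          (1 - ((∑ j ∈ Finset.range N, X j ω : ℕ) : ℝ) / N) ^ (k - α) ∂ℙ) - c| ≤
        1 - (N.descFactorial k : ℝ) / (N : ℝ) ^ k := by
    intro N hN
    have hN1 : 1 ≤ N := le_trans (le_max_right _ _) hN
    have hkN : k ≤ N := le_trans (le_max_left _ _) hN
    have hNkpos : (0 : ℝ) < (N : ℝ) ^ k := by positivity
    rw [hInt N hN1]
    have hsplit : ((N : ℝ) ^ k)⁻¹ * (∑ v ∈ P N, (ℙ (A v)).toReal) - c =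
        ((N : ℝ) ^ k)⁻¹ * ∑ v ∈ P N, ((ℙ (A v)).toReal - c) := by
      rw [Finset.sum_sub_distrib, Finset.sum_const, hcardP N, nsmul_eq_mul, mul_sub]
      congr 1
      rw [← mul_assoc, Nat.cast_pow, inv_mul_cancel₀ (by positivity), one_mul]
    rw [hsplit]
    rw [← Finset.sum_filter_add_sum_filter_not (P N) (fun v => Function.Injective v)]
    rw [Finset.sum_eq_zero (fun v hv => by rw [hval N hkN v hv, sub_self]), zero_add]
    have hbound : |∑ v ∈ (P N).filter (fun v => ¬ Function.Injective v),
        ((ℙ (A v)).toReal - c)| ≤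
        (((P N).filter (fun v => ¬ Function.Injective v)).card : ℝ) := by
      calc |∑ v ∈ (P N).filter (fun v => ¬ Function.Injective v), ((ℙ (A v)).toReal - c)|
          ≤ ∑ v ∈ (P N).filter (fun v => ¬ Function.Injective v), |(ℙ (A v)).toReal - c| :=
            Finset.abs_sum_le_sum_abs _ _
        _ ≤ ∑ _v ∈ (P N).filter (fun v => ¬ Function.Injective v), 1 := by
            refine Finset.sum_le_sum fun v _ => ?_
            rw [abs_sub_le_iff]
            constructor
            · have := (htoReal01 (A v)).1
              have := (htoReal01 {ω | ∀ j : Fin k, X (j : ℕ) ω = e j}).2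
              rw [hc]; linarith
            · have := (htoReal01 (A v)).2
              have := (htoReal01 {ω | ∀ j : Fin k, X (j : ℕ) ω = e j}).1
              rw [hc]; linarith
        _ = _ := by rw [Finset.sum_const, nsmul_eq_mul, mul_one]
    have hcardn : (((P N).filter (fun v => ¬ Function.Injective v)).card : ℝ) =
        (N : ℝ) ^ k - (N.descFactorial k : ℝ) := by
      have hsum := Finset.card_filter_add_card_filter_not
        (s := P N) (p := fun v => Function.Injective v)
      rw [aux_card k N, hcardP N] at hsum
      have hle := Nat.descFactorial_le_pow N k
      have : ((P N).filter (fun v => ¬ Function.Injective v)).card =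
          N ^ k - N.descFactorial k := by omega
      rw [this, Nat.cast_sub hle, Nat.cast_pow]
    rw [abs_mul, abs_of_nonneg (le_of_lt (inv_pos.mpr hNkpos))]
    calc ((N : ℝ) ^ k)⁻¹ * |∑ v ∈ (P N).filter (fun v => ¬ Function.Injective v),
          ((ℙ (A v)).toReal - c)|
        ≤ ((N : ℝ) ^ k)⁻¹ * ((N : ℝ) ^ k - (N.descFactorial k : ℝ)) := by
          refine mul_le_mul_of_nonneg_left ?_ (le_of_lt (inv_pos.mpr hNkpos))
          rw [← hcardn]; exact hbound
      _ = 1 - (N.descFactorial k : ℝ) / (N : ℝ) ^ k := by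
          field_simp
  -- the descFactorial ratio tends to 1
  have hdesc : Filter.Tendsto (fun N : ℕ => (N.descFactorial k : ℝ) / (N : ℝ) ^ k)
      Filter.atTop (nhds 1) := by
    have hev : ∀ᶠ N : ℕ in Filter.atTop,
        (∏ i ∈ Finset.range k, (1 - (i : ℝ) / (N : ℝ))) =
          (N.descFactorial k : ℝ) / (N : ℝ) ^ k := by
      filter_upwards [Filter.eventually_ge_atTop (max k 1)] with N hN
      have hN1 : 1 ≤ N := le_trans (le_max_right _ _) hN
      have hkN : k ≤ N := le_trans (le_max_left _ _) hN
      have hNne : (N : ℝ) ≠ 0 := Nat.cast_ne_zero.mpr (by omega)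
      rw [Nat.descFactorial_eq_prod_range, Nat.cast_prod]
      rw [show ((N : ℝ) ^ k) = ∏ _i ∈ Finset.range k, (N : ℝ) by
        rw [Finset.prod_const, Finset.card_range]]
      rw [← Finset.prod_div_distrib]
      refine Finset.prod_congr rfl fun i hi => ?_
      have hik : i < k := Finset.mem_range.mp hi
      rw [Nat.cast_sub (by omega)]
      field_simp
    have hlim : Filter.Tendsto (fun N : ℕ => ∏ i ∈ Finset.range k, (1 - (i : ℝ) / (N : ℝ)))
        Filter.atTop (nhds 1) := by
      have := tendsto_finset_prod (f := fun (i : ℕ) (N : ℕ) => 1 - (i : ℝ) / (N : ℝ))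
        (Finset.range k) (fun i _ =>
          (tendsto_const_nhds.sub (tendsto_const_div_atTop_nhds_zero_nat (i : ℝ))))
      simpa using this
    exact Filter.Tendsto.congr' hev hlim
  have herr : Filter.Tendsto (fun N : ℕ => 1 - (N.descFactorial k : ℝ) / (N : ℝ) ^ k)
      Filter.atTop (nhds 0) := by
    have h1 : Filter.Tendsto (fun _ : ℕ => (1 : ℝ)) Filter.atTop (nhds 1) := tendsto_const_nhds
    simpa using h1.sub hdesc
  rw [tendsto_iff_norm_sub_tendsto_zero]
  refine squeeze_zero' (Filter.Eventually.of_forall fun N => norm_nonneg _) ?_ herr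
  filter_upwards [Filter.eventually_ge_atTop (max k 1)] with N hN
  rw [Real.norm_eq_abs]
  exact hkey N hN
end
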